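/- arXiv:1810.01223 — 10 statements merged into one kernel-verified Lean document; each statement's English description precedes it below -/
import Mathlib

section
/- (Jump lemma for preemptive scheduling, Lemma 4.9.) Let s_f, P_f, s_i, P_i, T', T'' be real numbers and γ', γ'' real numbers with s_f + P_f ≥ s_i + P_i > 0, T' > 0, T'' > 0, γ' + 2 > 0, γ'' + 2 > 0, T' = 2(s_f + P_f)/(γ' + 2), T'' = 2(s_i + P_i)/(γ'' + 2), and T'' ≤ T'. Then 2(s_i + P_i)/(γ'' + 3) ≤ 2(s_f + P_f)/(γ' + 3). -/
/-! The next jump `2w/(γ+3)` of a class of weight `w` with current jump `T = 2w/(γ+2)` is the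
harmonic sum `(T⁻¹ + (2w)⁻¹)⁻¹`, which is monotone in both `T` and `w`; class `i` is behind `f`
in both arguments. -/

theorem div_add_one_eq_inv_add_inv_inv {K : Type*} [DivisionRing K] (c x : K) :
    c / (x + 1) = ((c / x)⁻¹ + c⁻¹)⁻¹ := by
  rw [inv_div, ← one_div c, ← add_div, inv_div]

theorem inv_add_inv_inv_le_inv_add_inv_inv {K : Type*} [Field K] [LinearOrder K]
    [IsStrictOrderedRing K] {a b c d : K} (ha : 0 < a) (hb : 0 < b) (hac : a ≤ c)
    (hbd : b ≤ d) : (a⁻¹ + b⁻¹)⁻¹ ≤ (c⁻¹ + d⁻¹)⁻¹ := by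
  have hc : 0 < c := ha.trans_le hac
  have hd : 0 < d := hb.trans_le hbd
  exact inv_anti₀ (by positivity) (add_le_add (inv_anti₀ ha hac) (inv_anti₀ hb hbd))

theorem preemptive_jump_lemma_general (sf Pf si Pi γ' γ'' T' T'' : ℝ)
    (hpos : 0 < si + Pi) (hfast : si + Pi ≤ sf + Pf)
    (hT'' : 0 < T'')
    (hjump' : T' = 2 * (sf + Pf) / (γ' + 2))
    (hjump'' : T'' = 2 * (si + Pi) / (γ'' + 2))
    (hle : T'' ≤ T') :
    2 * (si + Pi) / (γ'' + 3) ≤ 2 * (sf + Pf) / (γ' + 3) := by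
  rw [show γ'' + 3 = γ'' + 2 + 1 by ring, show γ' + 3 = γ' + 2 + 1 by ring,
    div_add_one_eq_inv_add_inv_inv, div_add_one_eq_inv_add_inv_inv, ← hjump', ← hjump'']
  exact inv_add_inv_inv_le_inv_add_inv_inv hT'' (by positivity) hle (by linarith)

/-- Jump lemma for preemptive scheduling (Lemma 4.9): if `T' = 2(s_f+P_f)/(γ'+2)` is a jump
of a fastest jumping class `f` (i.e. `s_f + P_f ≥ s_i + P_i`) and `T'' = 2(s_i+P_i)/(γ''+2)`
is a jump of a different class `i` with `T'' ≤ T'`, then the next jump of class `i` is at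
most the next jump of `f`. -/
theorem preemptive_jump_lemma (sf Pf si Pi γ' γ'' T' T'' : ℝ)
    (hpos : 0 < si + Pi) (hfast : si + Pi ≤ sf + Pf)
    (hT' : 0 < T') (hT'' : 0 < T'')
    (hγ' : 0 < γ' + 2) (hγ'' : 0 < γ'' + 2)
    (hjump' : T' = 2 * (sf + Pf) / (γ' + 2))
    (hjump'' : T'' = 2 * (si + Pi) / (γ'' + 2))
    (hle : T'' ≤ T') :
    2 * (si + Pi) / (γ'' + 3) ≤ 2 * (sf + Pf) / (γ' + 3) :=
  preemptive_jump_lemma_general sf Pf si Pi γ' γ'' T' T'' hpos hfast hT'' hjump' hjump'' hle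
end

section
/- (Lemma D.4.) Let f be a T-feasible non-preemptive schedule. Then for every class i, the number of machines containing at least one job of C_i is at least m_i, and the total number of machines satisfies m ≥ Σ_{i=1}^c m_i. -/
open Classical Finset

/-- The load of machine `u` in a non-preemptive schedule `f`. -/
noncomputable def npLoad {υ γ ι : Type*} [Fintype υ] [Fintype γ] [Fintype ι]
    (cl : ι → γ) (t : ι → ℝ) (s : γ → ℝ) (f : ι → υ) (u : υ) : ℝ :=
  (∑ j ∈ univ.filter (fun j => f j = u), t j) +
  (∑ i ∈ univ.filter (fun i => ∃ j, cl j = i ∧ f j = u), s i)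

/-- The minimum machine number `m_i` of class `i` for makespan `T`:
`⌈P(C_i)/(T−s_i)⌉` for an expensive class (`s_i > T/2`), and
`|C_i ∩ J_+| + ⌈P(C_i ∩ K)/(T−s_i)⌉` for a cheap class (`s_i ≤ T/2`), where
`J_+ = {j : t_j > T/2}` and `C_i ∩ K = {j ∈ C_i : t_j ≤ T/2 ∧ s_i + t_j > T/2}`. -/
noncomputable def mReq {γ ι : Type*} [Fintype γ] [Fintype ι]
    (cl : ι → γ) (t : ι → ℝ) (s : γ → ℝ) (T : ℝ) (i : γ) : ℤ :=
  if T / 2 < s i then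
    ⌈(∑ j ∈ univ.filter (fun j => cl j = i), t j) / (T - s i)⌉
  else
    ((univ.filter (fun j => cl j = i ∧ T / 2 < t j)).card : ℤ) +
    ⌈(∑ j ∈ univ.filter (fun j => cl j = i ∧ t j ≤ T / 2 ∧ T / 2 < s i + t j), t j) /
      (T - s i)⌉

/-! A job `j` of class `i` is *heavy* if `s_i + t_j > T/2`. In a `T`-feasible schedule no
machine carries heavy jobs of two different classes, so the sets of machines carrying heavy
jobs of the various classes are pairwise disjoint. It therefore suffices to show that class `i`
puts heavy jobs on at least `m_i` machines. For an expensive class every job is heavy and each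
machine holds at most `T - s_i` of its processing time; for a cheap class the jobs of `J_+` need
one machine each, and none of these machines has room for a job of `K`, whose processing time
again needs `⌈P(C_i ∩ K)/(T - s_i)⌉` further machines. -/

theorem Finset.ceil_sum_div_le_card_image {α β : Type*} (A : Finset α) (f : α → β)
    (w : α → ℝ) (hw : ∀ a ∈ A, 0 ≤ w a) {B : ℝ}
    (hB : ∀ b ∈ A.image f, ∑ a ∈ A with f a = b, w a ≤ B) :
    ⌈(∑ a ∈ A, w a) / B⌉ ≤ #(A.image f) := by
  have hsum : ∑ a ∈ A, w a ≤ #(A.image f) * B := calc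
    ∑ a ∈ A, w a = ∑ b ∈ A.image f, ∑ a ∈ A with f a = b, w a :=
      (sum_fiberwise_of_maps_to (fun a ha => mem_image_of_mem f ha) w).symm
    _ ≤ ∑ _b ∈ A.image f, B := sum_le_sum hB
    _ = #(A.image f) * B := by rw [sum_const, nsmul_eq_mul]
  rw [Int.ceil_le, Int.cast_natCast]
  rcases le_or_gt B 0 with hB0 | hB0
  · exact (div_nonpos_of_nonneg_of_nonpos (sum_nonneg hw) hB0).trans (Nat.cast_nonneg _)
  · exact (div_le_iff₀ hB0).2 hsum

noncomputable def heavyJobs {γ ι : Type*} [Fintype ι] (cl : ι → γ) (t : ι → ℝ) (s : γ → ℝ)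
    (T : ℝ) (i : γ) : Finset ι :=
  univ.filter (fun j => cl j = i ∧ T / 2 < s i + t j)

section Schedule

variable {υ γ ι : Type*} [Fintype υ] [Fintype γ] [Fintype ι]
  {cl : ι → γ} {t : ι → ℝ} {s : γ → ℝ} {f : ι → υ} {T : ℝ}

theorem sum_add_sum_le_npLoad (ht : ∀ j, 0 ≤ t j) (hs : ∀ i, 0 ≤ s i) {u : υ}
    {A : Finset ι} (hA : ∀ j ∈ A, f j = u)
    {I : Finset γ} (hI : ∀ i ∈ I, ∃ j, cl j = i ∧ f j = u) :
    ∑ j ∈ A, t j + ∑ i ∈ I, s i ≤ npLoad cl t s f u := by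
  refine add_le_add (sum_le_sum_of_subset_of_nonneg ?_ fun j _ _ => ht j)
    (sum_le_sum_of_subset_of_nonneg ?_ fun i _ _ => hs i)
  · exact fun j hj => mem_filter.2 ⟨mem_univ j, hA j hj⟩
  · exact fun i hi => mem_filter.2 ⟨mem_univ i, hI i hi⟩

variable (ht : ∀ j, 0 ≤ t j) (hs : ∀ i, 0 ≤ s i) (hfeas : ∀ u, npLoad cl t s f u ≤ T)
include ht hs hfeas

theorem sum_add_le_of_same_machine {i : γ} {u : υ} (hu : ∃ j, cl j = i ∧ f j = u)
    {A : Finset ι} (hA : ∀ j ∈ A, f j = u) :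
    ∑ j ∈ A, t j + s i ≤ T := by
  have := sum_add_sum_le_npLoad (I := {i}) ht hs hA (by simpa using hu)
  rw [sum_singleton] at this
  exact this.trans (hfeas u)

theorem add_add_le_of_same_machine {j k : ι} (hjk : j ≠ k) (hf : f j = f k) :
    t j + t k + s (cl j) ≤ T := by
  have := sum_add_le_of_same_machine (A := {j, k}) ht hs hfeas ⟨j, rfl, rfl⟩
    (by simp [hf])
  rwa [sum_pair hjk] at this

theorem add_add_add_le_of_same_machine {j k : ι} (hf : f j = f k) (hcl : cl j ≠ cl k) :
    t j + t k + (s (cl j) + s (cl k)) ≤ T := by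
  have hjk : j ≠ k := fun h => hcl (congrArg cl h)
  have := sum_add_sum_le_npLoad (A := {j, k}) (I := {cl j, cl k}) (f := f) (u := f j) ht hs
    (by simp [hf]) (by simpa using ⟨⟨j, rfl, rfl⟩, ⟨k, rfl, hf.symm⟩⟩)
  rw [sum_pair hjk, sum_pair hcl] at this
  exact this.trans (hfeas _)

theorem ceil_sum_div_le_card_image_of_class {i : γ} {A : Finset ι}
    (hA : ∀ j ∈ A, cl j = i) :
    ⌈(∑ j ∈ A, t j) / (T - s i)⌉ ≤ #(A.image f) := by
  refine A.ceil_sum_div_le_card_image f t (fun j _ => ht j) fun u hu => ?_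
  obtain ⟨j, hj, rfl⟩ := mem_image.1 hu
  have := sum_add_le_of_same_machine ht hs hfeas ⟨j, hA j hj, rfl⟩
    (A := A.filter (f · = f j)) fun k hk => (mem_filter.1 hk).2
  linarith

theorem disjoint_image_heavyJobs {i i' : γ} (hii' : i ≠ i') :
    Disjoint ((heavyJobs cl t s T i).image f) ((heavyJobs cl t s T i').image f) := by
  rw [disjoint_left]
  rintro u hu hu'
  obtain ⟨j, hj, rfl⟩ := mem_image.1 hu
  obtain ⟨k, hk, hfk⟩ := mem_image.1 hu'
  simp only [heavyJobs, mem_filter, mem_univ, true_and] at hj hk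
  have := add_add_add_le_of_same_machine ht hs hfeas hfk.symm (by rwa [hj.1, hk.1])
  rw [hj.1, hk.1] at this
  linarith [hj.2, hk.2]

theorem ceil_div_le_card_image_heavyJobs {i : γ} (hexp : T / 2 < s i) :
    ⌈(∑ j ∈ univ.filter (fun j => cl j = i), t j) / (T - s i)⌉ ≤
      #((heavyJobs cl t s T i).image f) := by
  refine (ceil_sum_div_le_card_image_of_class ht hs hfeas fun j hj => (mem_filter.1 hj).2).trans
    (Nat.cast_le.2 (card_le_card (image_subset_image fun j hj => ?_)))
  simp only [heavyJobs, mem_filter, mem_univ, true_and] at hj ⊢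
  exact ⟨hj, by linarith [ht j]⟩

theorem card_add_ceil_div_le_card_image_heavyJobs (i : γ) :
    #(univ.filter (fun j => cl j = i ∧ T / 2 < t j)) +
      ⌈(∑ j ∈ univ.filter (fun j => cl j = i ∧ t j ≤ T / 2 ∧ T / 2 < s i + t j), t j) /
        (T - s i)⌉ ≤ #((heavyJobs cl t s T i).image f) := by
  set big := univ.filter (fun j => cl j = i ∧ T / 2 < t j)
  set K := univ.filter (fun j => cl j = i ∧ t j ≤ T / 2 ∧ T / 2 < s i + t j)
  have hmem_big {j} : j ∈ big ↔ cl j = i ∧ T / 2 < t j := by simp [big]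
  have hmem_K {j} : j ∈ K ↔ cl j = i ∧ t j ≤ T / 2 ∧ T / 2 < s i + t j := by simp [K]
  have hinj : Set.InjOn f big := by
    intro j hj k hk hf
    by_contra hjk
    have := add_add_le_of_same_machine ht hs hfeas hjk hf
    linarith [(hmem_big.1 hj).2, (hmem_big.1 hk).2, hs (cl j)]
  have hdisj : Disjoint (big.image f) (K.image f) := by
    rw [disjoint_left]
    rintro u hu hu'
    obtain ⟨j, hj, rfl⟩ := mem_image.1 hu
    obtain ⟨k, hk, hfk⟩ := mem_image.1 hu'
    rw [hmem_big] at hj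
    rw [hmem_K] at hk
    have hjk : j ≠ k := by rintro rfl; linarith [hj.2, hk.2.1]
    have := add_add_le_of_same_machine ht hs hfeas hjk hfk.symm
    rw [hj.1] at this
    linarith [hj.2, hk.2.2]
  have hsub : big ∪ K ⊆ heavyJobs cl t s T i := by
    intro j hj
    simp only [heavyJobs, mem_filter, mem_univ, true_and]
    rcases mem_union.1 hj with hj | hj
    · exact ⟨(hmem_big.1 hj).1, by linarith [(hmem_big.1 hj).2, hs i]⟩
    · exact ⟨(hmem_K.1 hj).1, (hmem_K.1 hj).2.2⟩
  calc (#big : ℤ) + ⌈(∑ j ∈ K, t j) / (T - s i)⌉ ≤ #(big.image f) + #(K.image f) := by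
        rw [card_image_of_injOn hinj]
        gcongr
        exact ceil_sum_div_le_card_image_of_class ht hs hfeas fun j hj => (hmem_K.1 hj).1
    _ = #((big ∪ K).image f) := by rw [image_union, card_union_of_disjoint hdisj]; push_cast; rfl
    _ ≤ #((heavyJobs cl t s T i).image f) := by
        exact_mod_cast card_le_card (image_subset_image hsub)

theorem mReq_le_card_image_heavyJobs (i : γ) :
    mReq cl t s T i ≤ #((heavyJobs cl t s T i).image f) := by
  unfold mReq
  split_ifs with hexp
  · exact ceil_div_le_card_image_heavyJobs ht hs hfeas hexp
  · exact card_add_ceil_div_le_card_image_heavyJobs ht hs hfeas i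

end Schedule

theorem np_min_machines_general {υ γ ι : Type*} [Fintype υ] [Fintype γ] [Fintype ι]
    (cl : ι → γ) (t : ι → ℝ) (s : γ → ℝ)
    (ht : ∀ j, 0 < t j) (hs : ∀ i, 0 < s i)
    (T : ℝ) (f : ι → υ)
    (hfeas : ∀ u, npLoad cl t s f u ≤ T) :
    (∀ i : γ, mReq cl t s T i ≤
      ((univ.filter (fun u : υ => ∃ j, cl j = i ∧ f j = u)).card : ℤ)) ∧
    (∑ i : γ, mReq cl t s T i) ≤ (Fintype.card υ : ℤ) := by
  have ht' j := (ht j).le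
  have hs' i := (hs i).le
  refine ⟨fun i => (mReq_le_card_image_heavyJobs ht' hs' hfeas i).trans ?_, ?_⟩
  · refine Nat.cast_le.2 (card_le_card fun u hu => ?_)
    obtain ⟨j, hj, rfl⟩ := mem_image.1 hu
    exact mem_filter.2 ⟨mem_univ _, j, (mem_filter.1 hj).2.1, rfl⟩
  calc ∑ i, mReq cl t s T i ≤ ∑ i, (#((heavyJobs cl t s T i).image f) : ℤ) :=
        sum_le_sum fun i _ => mReq_le_card_image_heavyJobs ht' hs' hfeas i
    _ = #(univ.biUnion fun i => (heavyJobs cl t s T i).image f) := by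
        rw [card_biUnion fun i _ i' _ => disjoint_image_heavyJobs ht' hs' hfeas]
        push_cast; rfl
    _ ≤ Fintype.card υ := by exact_mod_cast card_le_univ _

/-- Lemma D.4: in a `T`-feasible non-preemptive schedule, every class `i` uses at least
`m_i` machines, and the total number of machines is at least `Σ_i m_i`. -/
theorem np_min_machines {υ γ ι : Type*} [Fintype υ] [Fintype γ] [Fintype ι]
    (cl : ι → γ) (t : ι → ℝ) (s : γ → ℝ)
    (ht : ∀ j, 0 < t j) (hs : ∀ i, 0 < s i)
    (hcl : ∀ i : γ, ∃ j, cl j = i)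
    (T : ℝ) (f : ι → υ)
    (hfeas : ∀ u, npLoad cl t s f u ≤ T) :
    (∀ i : γ, mReq cl t s T i ≤
      ((univ.filter (fun u : υ => ∃ j, cl j = i ∧ f j = u)).card : ℤ)) ∧
    (∑ i : γ, mReq cl t s T i) ≤ (Fintype.card υ : ℤ) :=
  np_min_machines_general cl t s ht hs T f hfeas
end

section
/- (Note D.6.) Let f be a T-feasible non-preemptive schedule and let i be a class with x_i := P(C_i) − m_i·(T − s_i) > 0. Then the number of machines containing at least one job of C_i is at least m_i + 1. -/
open Classical Finset

/-- Note D.6: in a `T`-feasible non-preemptive schedule, a class `i` with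
`x_i = P(C_i) − m_i·(T − s_i) > 0` uses at least `m_i + 1` machines. -/
theorem np_extra_machine {υ γ ι : Type*} [Fintype υ] [Fintype γ] [Fintype ι]
    (cl : ι → γ) (t : ι → ℝ) (s : γ → ℝ)
    (ht : ∀ j, 0 < t j) (hs : ∀ i, 0 < s i)
    (hcl : ∀ i : γ, ∃ j, cl j = i)
    (T : ℝ) (f : ι → υ)
    (hfeas : ∀ u, npLoad cl t s f u ≤ T)
    (i : γ)
    (hx : 0 < (∑ j ∈ univ.filter (fun j => cl j = i), t j) -
      (mReq cl t s T i : ℝ) * (T - s i)) :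
    mReq cl t s T i + 1 ≤
      ((univ.filter (fun u : υ => ∃ j, cl j = i ∧ f j = u)).card : ℤ) := by
  set U : Finset υ := univ.filter (fun u : υ => ∃ j, cl j = i ∧ f j = u) with hU
  -- T - s i > 0
  obtain ⟨j0, hj0⟩ := hcl i
  have hsle : ∀ u ∈ U, s i ≤ ∑ k ∈ univ.filter (fun k => ∃ j, cl j = k ∧ f j = u), s k := by
    intro u hu
    apply Finset.single_le_sum (f := s) (fun k _ => (hs k).le)
    simp only [hU, mem_filter, mem_univ, true_and] at hu ⊢
    exact hu
  have hTs : 0 < T - s i := by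
    have hu : f j0 ∈ U := by
      simp only [hU, mem_filter, mem_univ, true_and]; exact ⟨j0, hj0, rfl⟩
    have h1 : s i + t j0 ≤ npLoad cl t s f (f j0) := by
      have h2 : t j0 ≤ ∑ j ∈ univ.filter (fun j => f j = f j0), t j := by
        apply Finset.single_le_sum (f := t) (fun k _ => (ht k).le)
        simp
      have h3 := hsle (f j0) hu
      unfold npLoad; linarith
    have := hfeas (f j0)
    have := ht j0
    linarith
  -- each used machine carries ≤ T - s i of class-i processing
  have hmach : ∀ u ∈ U,
      ∑ j ∈ (univ.filter (fun j => cl j = i)).filter (fun j => f j = u), t j ≤ T - s i := by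
    intro u hu
    have h2 : ∑ j ∈ (univ.filter (fun j => cl j = i)).filter (fun j => f j = u), t j ≤
        ∑ j ∈ univ.filter (fun j => f j = u), t j := by
      apply Finset.sum_le_sum_of_subset_of_nonneg
      · intro j hj
        simp only [mem_filter, mem_univ, true_and] at hj ⊢
        exact hj.2
      · exact fun k _ _ => (ht k).le
    have h3 := hsle u hu
    have := hfeas u
    unfold npLoad at this
    linarith
  -- total class-i processing ≤ |U| * (T - s i)
  have hfib : ∑ u ∈ U, ∑ j ∈ (univ.filter (fun j => cl j = i)).filter (fun j => f j = u), t j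
      = ∑ j ∈ univ.filter (fun j => cl j = i), t j := by
    apply Finset.sum_fiberwise_of_maps_to
    intro j hj
    simp only [mem_filter, mem_univ, true_and] at hj
    simp only [hU, mem_filter, mem_univ, true_and]
    exact ⟨j, hj, rfl⟩
  have hbound : ∑ j ∈ univ.filter (fun j => cl j = i), t j ≤ (U.card : ℝ) * (T - s i) := by
    rw [← hfib]
    calc ∑ u ∈ U, ∑ j ∈ (univ.filter (fun j => cl j = i)).filter (fun j => f j = u), t j
        ≤ ∑ _u ∈ U, (T - s i) := Finset.sum_le_sum hmach
      _ = (U.card : ℝ) * (T - s i) := by rw [Finset.sum_const, nsmul_eq_mul]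
  have hlt : (mReq cl t s T i : ℝ) * (T - s i) < (U.card : ℝ) * (T - s i) := by linarith
  have : (mReq cl t s T i : ℝ) < (U.card : ℝ) := lt_of_mul_lt_mul_right (by linarith) hTs.le
  have : mReq cl t s T i < (U.card : ℤ) := by exact_mod_cast this
  omega
end

section
/- (Theorem 3.4 (i), non-preemptive rejection test.) Suppose there exists a T-feasible non-preemptive schedule. Then m·T ≥ L_nonp and m ≥ m', where L_nonp = P(J) + Σ_{i=1}^c m_i·s_i + Σ_{i : x_i > 0} s_i, m' = Σ_{i=1}^c m_i, and x_i = P(C_i) − m_i·(T − s_i). Equivalently, if m·T < L_nonp or m < m', then T is strictly smaller than the optimal non-preemptive makespan. -/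
open Classical Finset

/-- Theorem 3.4 (i): if a `T`-feasible non-preemptive schedule exists, then
`m·T ≥ L_nonp = P(J) + Σ_i m_i s_i + Σ_{i : x_i > 0} s_i` and `m ≥ m' = Σ_i m_i`,
where `x_i = P(C_i) − m_i (T − s_i)`. -/
theorem np_rejection_test {υ γ ι : Type*} [Fintype υ] [Fintype γ] [Fintype ι]
    (cl : ι → γ) (t : ι → ℝ) (s : γ → ℝ)
    (ht : ∀ j, 0 < t j) (hs : ∀ i, 0 < s i)
    (hcl : ∀ i : γ, ∃ j, cl j = i)
    (T : ℝ)
    (hfeas : ∃ f : ι → υ, ∀ u, npLoad cl t s f u ≤ T) :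
    ((∑ j, t j) + (∑ i : γ, (mReq cl t s T i : ℝ) * s i) +
      (∑ i ∈ univ.filter (fun i : γ =>
        0 < (∑ j ∈ univ.filter (fun j => cl j = i), t j) -
          (mReq cl t s T i : ℝ) * (T - s i)), s i))
      ≤ (Fintype.card υ : ℝ) * T ∧
    (∑ i : γ, mReq cl t s T i) ≤ (Fintype.card υ : ℤ) := by
  classical
  obtain ⟨f, hf⟩ := hfeas
  -- fundamental bound: any set of classes hosted on `u` plus jobs on `u` has weight ≤ T
  have load_ge : ∀ (u : υ) (I : Finset γ) (S : Finset ι),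
      (∀ k ∈ I, ∃ j, cl j = k ∧ f j = u) → (∀ j ∈ S, f j = u) →
      (∑ k ∈ I, s k) + (∑ j ∈ S, t j) ≤ T := by
    intro u I S hI hS
    have h1 : I ⊆ univ.filter (fun i => ∃ j, cl j = i ∧ f j = u) := by
      intro k hk; simp only [mem_filter, mem_univ, true_and]; exact hI k hk
    have h2 : S ⊆ univ.filter (fun j => f j = u) := by
      intro j hj; simp only [mem_filter, mem_univ, true_and]; exact hS j hj
    have e1 : (∑ k ∈ I, s k) ≤ ∑ i ∈ univ.filter (fun i => ∃ j, cl j = i ∧ f j = u), s i :=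
      Finset.sum_le_sum_of_subset_of_nonneg h1 (fun i _ _ => (hs i).le)
    have e2 : (∑ j ∈ S, t j) ≤ ∑ j ∈ univ.filter (fun j => f j = u), t j :=
      Finset.sum_le_sum_of_subset_of_nonneg h2 (fun j _ _ => (ht j).le)
    have := hf u
    unfold npLoad at this
    linarith
  -- T - s i > 0 for every class
  have hTs : ∀ i : γ, 0 < T - s i := by
    intro i
    obtain ⟨j, hj⟩ := hcl i
    have := load_ge (f j) {i} {j} (by intro k hk; simp only [mem_singleton] at hk
                                      exact ⟨j, by simp [hk, hj]⟩)
      (by intro j' hj'; simp only [mem_singleton] at hj'; simp [hj'])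
    simp only [sum_singleton] at this
    have := ht j
    linarith
  -- notation
  set A : γ → Finset ι := fun i => univ.filter (fun j => cl j = i) with hA
  set Hh : γ → Finset ι := fun i => univ.filter (fun j => cl j = i ∧ T / 2 < t j) with hH
  set Kk : γ → Finset ι :=
    fun i => univ.filter (fun j => cl j = i ∧ t j ≤ T / 2 ∧ T / 2 < s i + t j) with hK
  set M : γ → Finset υ := fun i => univ.filter (fun u => ∃ j, cl j = i ∧ f j = u) with hM
  set MK : γ → Finset υ := fun i => univ.filter (fun u => ∃ j ∈ Kk i, f j = u) with hMK
  -- processing bound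
  have procBound : ∀ (i : γ) (N : Finset υ) (W : Finset ι),
      (∀ j ∈ W, cl j = i) → (∀ j ∈ W, f j ∈ N) →
      (∑ j ∈ W, t j) ≤ (N.card : ℝ) * (T - s i) := by
    intro i N W hcls hmaps
    rw [← Finset.sum_fiberwise_of_maps_to hmaps t]
    calc (∑ u ∈ N, ∑ j ∈ W.filter (fun j => f j = u), t j)
        ≤ ∑ _u ∈ N, (T - s i) := by
          apply Finset.sum_le_sum
          intro u _
          rcases (W.filter (fun j => f j = u)).eq_empty_or_nonempty with he | ⟨j0, hj0⟩
          · rw [he, Finset.sum_empty]; exact (hTs i).le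
          · simp only [mem_filter] at hj0
            have := load_ge u {i} (W.filter (fun j => f j = u))
              (by intro k hk; simp only [mem_singleton] at hk
                  exact ⟨j0, by rw [hk] at *; exact ⟨hcls j0 hj0.1, hj0.2⟩⟩)
              (by intro j hj; exact (mem_filter.1 hj).2)
            simp only [sum_singleton] at this
            linarith
      _ = (N.card : ℝ) * (T - s i) := by rw [Finset.sum_const, nsmul_eq_mul]
  have hMi : ∀ i, (∑ j ∈ A i, t j) ≤ ((M i).card : ℝ) * (T - s i) := by
    intro i
    apply procBound i (M i) (A i)
    · intro j hj; exact (mem_filter.1 hj).2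
    · intro j hj
      simp only [hM, mem_filter, mem_univ, true_and]
      exact ⟨j, (mem_filter.1 hj).2, rfl⟩
  have hKi : ∀ i, (∑ j ∈ Kk i, t j) ≤ ((MK i).card : ℝ) * (T - s i) := by
    intro i
    apply procBound i (MK i) (Kk i)
    · intro j hj; exact ((mem_filter.1 hj).2).1
    · intro j hj
      simp only [hMK, mem_filter, mem_univ, true_and]
      exact ⟨j, hj, rfl⟩
  have ceil_le_of : ∀ (P : ℝ) (i : γ) (n : ℕ), P ≤ (n : ℝ) * (T - s i) →
      ⌈P / (T - s i)⌉ ≤ (n : ℤ) := by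
    intro P i n h
    rw [Int.ceil_le]
    rw [div_le_iff₀ (hTs i)]
    push_cast
    exact h
  -- injectivity of f on heavy jobs
  have injH : ∀ i, Set.InjOn f (Hh i : Set ι) := by
    intro i j hj j' hj' hfe
    by_contra hne
    simp only [hH, coe_filter, Set.mem_setOf_eq, mem_univ, true_and] at hj hj'
    have := load_ge (f j) ∅ {j, j'} (by simp)
      (by intro x hx; rcases mem_insert.1 hx with h | h
          · rw [h]
          · rw [mem_singleton.1 h, ← hfe])
    rw [Finset.sum_empty, Finset.sum_pair hne] at this
    linarith [hj.2, hj'.2]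
  -- disjointness of heavy-machines and K-machines within a class
  have disjHMK : ∀ i, Disjoint ((Hh i).image f) (MK i) := by
    intro i
    rw [Finset.disjoint_left]
    intro u hu1 hu2
    obtain ⟨j, hjH, hfj⟩ := Finset.mem_image.1 hu1
    simp only [hMK, mem_filter, mem_univ, true_and] at hu2
    obtain ⟨j', hj'K, hfj'⟩ := hu2
    simp only [hH, mem_filter, mem_univ, true_and] at hjH
    simp only [hK, mem_filter, mem_univ, true_and] at hj'K
    have hne : j ≠ j' := by
      intro h; rw [h] at hjH; linarith [hjH.2, hj'K.2.1]
    have := load_ge u {i} {j, j'}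
      (by intro k hk; simp only [mem_singleton] at hk; rw [hk] at *
          exact ⟨j, hjH.1, hfj⟩)
      (by intro x hx; rcases mem_insert.1 hx with h | h
          · rw [h]; exact hfj
          · rw [mem_singleton.1 h]; exact hfj')
    rw [Finset.sum_singleton, Finset.sum_pair hne] at this
    linarith [hjH.2, hj'K.2.2]
  -- the block sets
  set B : γ → Finset υ := fun i =>
    if T / 2 < s i then M i else (Hh i).image f ∪ MK i with hB
  have hBsub : ∀ i, B i ⊆ M i := by
    intro i
    simp only [hB]
    split_ifs with h
    · exact subset_rfl
    · intro u hu
      rcases Finset.mem_union.1 hu with hu | hu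
      · obtain ⟨j, hjH, hfj⟩ := Finset.mem_image.1 hu
        simp only [hH, mem_filter, mem_univ, true_and] at hjH
        simp only [hM, mem_filter, mem_univ, true_and]
        exact ⟨j, hjH.1, hfj⟩
      · simp only [hMK, mem_filter, mem_univ, true_and] at hu
        obtain ⟨j, hjK, hfj⟩ := hu
        simp only [hK, mem_filter, mem_univ, true_and] at hjK
        simp only [hM, mem_filter, mem_univ, true_and]
        exact ⟨j, hjK.1, hfj⟩
  have hBcardEq : ∀ i, ¬ T / 2 < s i → (B i).card = (Hh i).card + (MK i).card := by
    intro i h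
    simp only [hB]
    simp only [if_neg h]
    rw [Finset.card_union_of_disjoint (disjHMK i), Finset.card_image_of_injOn (injH i)]
  have hBcard : ∀ i, mReq cl t s T i ≤ ((B i).card : ℤ) := by
    intro i
    unfold mReq
    split_ifs with h
    · have : B i = M i := by rw [hB]; simp only [if_pos h]
      rw [this]
      exact ceil_le_of _ i _ (hMi i)
    · rw [hBcardEq i h]
      push_cast
      have h2 : ⌈(∑ j ∈ univ.filter
            (fun j => cl j = i ∧ t j ≤ T / 2 ∧ T / 2 < s i + t j), t j) / (T - s i)⌉
          ≤ ((MK i).card : ℤ) := ceil_le_of _ i _ (hKi i)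
      have h3 : (univ.filter (fun j => cl j = i ∧ T / 2 < t j)) = Hh i := by rw [hH]
      rw [h3]
      omega
  have hma : ∀ i, mReq cl t s T i ≤ ((M i).card : ℤ) := by
    intro i
    refine (hBcard i).trans ?_
    exact_mod_cast Finset.card_le_card (hBsub i)
  -- first inequality
  have hcnt : ∀ i : γ, (mReq cl t s T i : ℝ) +
      (if 0 < (∑ j ∈ A i, t j) - (mReq cl t s T i : ℝ) * (T - s i) then 1 else 0)
      ≤ ((M i).card : ℝ) := by
    intro i
    split_ifs with hx
    · have h1 : (mReq cl t s T i : ℝ) * (T - s i) < ((M i).card : ℝ) * (T - s i) := by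
        have := hMi i
        linarith
      have h2 : (mReq cl t s T i : ℝ) < ((M i).card : ℝ) :=
        lt_of_mul_lt_mul_right h1 (hTs i).le
      have h3 : mReq cl t s T i < ((M i).card : ℤ) := by exact_mod_cast h2
      have : mReq cl t s T i + 1 ≤ ((M i).card : ℤ) := h3
      exact_mod_cast this
    · simpa using (by exact_mod_cast hma i : (mReq cl t s T i : ℝ) ≤ ((M i).card : ℝ))
  have load_sum : (∑ u : υ, npLoad cl t s f u)
      = (∑ j, t j) + ∑ i : γ, ((M i).card : ℝ) * s i := by
    unfold npLoad
    rw [Finset.sum_add_distrib]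
    congr 1
    · exact Finset.sum_fiberwise univ f t
    · have : ∀ u : υ, (∑ i ∈ univ.filter (fun i => ∃ j, cl j = i ∧ f j = u), s i)
          = ∑ i : γ, (if (∃ j, cl j = i ∧ f j = u) then s i else 0) := by
        intro u; rw [Finset.sum_filter]
      rw [Finset.sum_congr rfl (fun u _ => this u), Finset.sum_comm]
      apply Finset.sum_congr rfl
      intro i _
      rw [← Finset.sum_filter, Finset.sum_const, nsmul_eq_mul]
  constructor
  · have hsum : (∑ i : γ, (mReq cl t s T i : ℝ) * s i) +
        (∑ i ∈ univ.filter (fun i : γ =>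
          0 < (∑ j ∈ univ.filter (fun j => cl j = i), t j) -
            (mReq cl t s T i : ℝ) * (T - s i)), s i)
        ≤ ∑ i : γ, ((M i).card : ℝ) * s i := by
      rw [Finset.sum_filter, ← Finset.sum_add_distrib]
      apply Finset.sum_le_sum
      intro i _
      have := hcnt i
      have hsi := hs i
      have hAi : (univ.filter (fun j => cl j = i)) = A i := by rw [hA]
      rw [hAi]
      split_ifs with hx <;> split_ifs at this <;> nlinarith
    have hT : (∑ u : υ, npLoad cl t s f u) ≤ (Fintype.card υ : ℝ) * T := by
      calc (∑ u : υ, npLoad cl t s f u) ≤ ∑ _u : υ, T := Finset.sum_le_sum (fun u _ => hf u)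
        _ = (Fintype.card υ : ℝ) * T := by rw [Finset.sum_const, nsmul_eq_mul, Finset.card_univ]
    rw [load_sum] at hT
    linarith
  -- second inequality
  · have blockBig : ∀ i u, u ∈ B i → ∃ (I : Finset γ) (S : Finset ι),
        (∀ k ∈ I, ∃ j, cl j = k ∧ f j = u) ∧ (∀ j ∈ S, f j = u) ∧
        (∀ k ∈ I, k = i) ∧ (∀ j ∈ S, cl j = i) ∧
        T / 2 < (∑ k ∈ I, s k) + (∑ j ∈ S, t j) := by
      intro i u hu
      simp only [hB] at hu
      split_ifs at hu with h
      · simp only [hM, mem_filter, mem_univ, true_and] at hu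
        refine ⟨{i}, ∅, ?_, by simp, by simp, by simp, ?_⟩
        · intro k hk; rw [mem_singleton.1 hk]; exact hu
        · rw [Finset.sum_singleton, Finset.sum_empty]; linarith
      · rcases Finset.mem_union.1 hu with hu | hu
        · obtain ⟨j, hjH, hfj⟩ := Finset.mem_image.1 hu
          simp only [hH, mem_filter, mem_univ, true_and] at hjH
          refine ⟨∅, {j}, by simp, ?_, by simp, ?_, ?_⟩
          · intro x hx; rw [mem_singleton.1 hx]; exact hfj
          · intro x hx; rw [mem_singleton.1 hx]; exact hjH.1
          · rw [Finset.sum_empty, Finset.sum_singleton]; linarith [hjH.2]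
        · simp only [hMK, mem_filter, mem_univ, true_and] at hu
          obtain ⟨j, hjK, hfj⟩ := hu
          simp only [hK, mem_filter, mem_univ, true_and] at hjK
          refine ⟨{i}, {j}, ?_, ?_, by simp, ?_, ?_⟩
          · intro k hk; rw [mem_singleton.1 hk]; exact ⟨j, hjK.1, hfj⟩
          · intro x hx; rw [mem_singleton.1 hx]; exact hfj
          · intro x hx; rw [mem_singleton.1 hx]; exact hjK.1
          · rw [Finset.sum_singleton, Finset.sum_singleton]; linarith [hjK.2.2]
    have hdisj : ∀ i ∈ (univ : Finset γ), ∀ i' ∈ (univ : Finset γ), i ≠ i' →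
        Disjoint (B i) (B i') := by
      intro i _ i' _ hne
      rw [Finset.disjoint_left]
      intro u hu hu'
      obtain ⟨I, S, c1, c2, c3, c4, c5⟩ := blockBig i u hu
      obtain ⟨I', S', d1, d2, d3, d4, d5⟩ := blockBig i' u hu'
      have hIdisj : Disjoint I I' := by
        rw [Finset.disjoint_left]
        intro k hk hk'
        exact hne ((c3 k hk).symm.trans (d3 k hk'))
      have hSdisj : Disjoint S S' := by
        rw [Finset.disjoint_left]
        intro j hj hj'
        exact hne ((c4 j hj).symm.trans (d4 j hj'))
      have := load_ge u (I ∪ I') (S ∪ S')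
        (by intro k hk; rcases Finset.mem_union.1 hk with h | h
            · exact c1 k h
            · exact d1 k h)
        (by intro j hj; rcases Finset.mem_union.1 hj with h | h
            · exact c2 j h
            · exact d2 j h)
      rw [Finset.sum_union hIdisj, Finset.sum_union hSdisj] at this
      linarith
    calc (∑ i : γ, mReq cl t s T i) ≤ ∑ i : γ, ((B i).card : ℤ) :=
          Finset.sum_le_sum (fun i _ => hBcard i)
      _ = (((univ : Finset γ).biUnion B).card : ℤ) := by
          rw [Finset.card_biUnion hdisj]; push_cast; rfl
      _ ≤ (Fintype.card υ : ℤ) := by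
          exact_mod_cast Finset.card_le_card (Finset.subset_univ _)
end

section
/- (Theorem 3.4 (ii), non-preemptive 3/2-dual approximation.) Suppose T ≥ s_i + t_j for every class i and every job j ∈ C_i, and suppose m·T ≥ L_nonp and m ≥ m', where L_nonp = P(J) + Σ_{i=1}^c m_i·s_i + Σ_{i : x_i > 0} s_i, m' = Σ_{i=1}^c m_i, and x_i = P(C_i) − m_i·(T − s_i). Then there exists a non-preemptive schedule whose makespan is at most (3/2)·T. -/
open Classical Finset

/-- The makespan of a non-preemptive schedule: the maximum machine load. -/
noncomputable def npMakespan {υ γ ι : Type*} [Fintype υ] [Fintype γ] [Fintype ι]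
    [Nonempty υ] (cl : ι → γ) (t : ι → ℝ) (s : γ → ℝ) (f : ι → υ) : ℝ :=
  univ.sup' univ_nonempty (npLoad cl t s f)

/-!
Every class `i` first gets `m_i` machines of its own. Its big jobs (`t_j > T/2`) get one machine
each; then its medium jobs (`t_j ≤ T/2 < s_i + t_j`), and after them its small ones, go by first
fit onto a machine whose jobs sum to less than `T - s_i`, which keeps every load within `3T/2`.
The ceiling in `m_i` leaves no room for a medium job to be left over, and a small job left over
forces `x_i > 0`; so the leftover work, one setup per class included, is at most what
`m·T ≥ L_nonp` leaves below `T` on the machines. The leftover small jobs are then placed class by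
class by next fit over the machines. A machine is closed only when the next job does not fit
within `3T/2`, i.e. when its load exceeds `T`, or `T + s_i` if class `i` is on it already (its
setup then has to be paid again on the next machine). Hence the spare capacity below `T` of the
machines still open never falls short of the work still to be placed.
-/
open Function

namespace BatchSetup

section Fiber

variable {ι α : Type*} [Fintype ι]

noncomputable def fiber (f : ι → α) (a : α) : Finset ι := univ.filter (fun j => f j = a)

@[simp]
lemma mem_fiber {f : ι → α} {a : α} {j : ι} : j ∈ fiber f a ↔ f j = a := by
  simp [fiber]

lemma fiber_update_self {f : ι → α} {j : ι} {a : α} (h : f j ≠ a) :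
    fiber (update f j a) a = insert j (fiber f a) := by
  ext j'
  by_cases hj : j' = j
  · subst hj; simp
  · simp [hj]

lemma fiber_update_of_ne {f : ι → α} {j : ι} {a b : α} (hb : f j ≠ b) (hab : a ≠ b) :
    fiber (update f j a) b = fiber f b := by
  ext j'
  by_cases hj : j' = j
  · subst hj; simp [hb, hab]
  · simp [hj]

lemma fiber_comp_of_injective {β : Type*} {e : α → β} (he : Injective e) (f : ι → α) (a : α) :
    fiber (e ∘ f) (e a) = fiber f a := by
  ext j
  simp [he.eq_iff]

end Fiber

section Work

variable {ι γ : Type*} (cl : ι → γ) (t : ι → ℝ) (s : γ → ℝ)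

noncomputable def work (P : Finset ι) : ℝ := ∑ j ∈ P, t j + ∑ i ∈ P.image cl, s i

noncomputable def setupCost (P : Finset ι) (i : γ) : ℝ := if i ∈ P.image cl then 0 else s i

variable {cl t s}

lemma setupCost_nonneg (hs : ∀ i, 0 ≤ s i) (P : Finset ι) (i : γ) : 0 ≤ setupCost cl s P i := by
  unfold setupCost; split_ifs <;> simp [hs i]

lemma setupCost_le (hs : ∀ i, 0 ≤ s i) (P : Finset ι) (i : γ) : setupCost cl s P i ≤ s i := by
  unfold setupCost; split_ifs <;> simp [hs i]

lemma setupCost_eq_zero {P : Finset ι} {j : ι} (hj : j ∈ P) : setupCost cl s P (cl j) = 0 :=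
  if_pos (mem_image_of_mem cl hj)

lemma work_nonneg (ht : ∀ j, 0 ≤ t j) (hs : ∀ i, 0 ≤ s i) (P : Finset ι) : 0 ≤ work cl t s P :=
  add_nonneg (sum_nonneg fun j _ => ht j) (sum_nonneg fun i _ => hs i)

lemma work_insert {P : Finset ι} {j : ι} (hj : j ∉ P) :
    work cl t s (insert j P) = work cl t s P + t j + setupCost cl s P (cl j) := by
  unfold work setupCost
  rw [sum_insert hj, image_insert]
  split_ifs with h
  · rw [insert_eq_of_mem h]; ring
  · rw [sum_insert h]; ring

lemma work_union {P Q : Finset ι} (h : Disjoint (P.image cl) (Q.image cl)) :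
    work cl t s (P ∪ Q) = work cl t s P + work cl t s Q := by
  have hPQ : Disjoint P Q := disjoint_left.2 fun j hP hQ =>
    disjoint_left.1 h (mem_image_of_mem cl hP) (mem_image_of_mem cl hQ)
  unfold work
  rw [sum_union hPQ, image_union, sum_union h]
  ring

lemma work_of_forall_class_eq {P : Finset ι} {i : γ} (hP : P.Nonempty) (h : ∀ j ∈ P, cl j = i) :
    work cl t s P = ∑ j ∈ P, t j + s i := by
  have himage : P.image cl = {i} := by
    rw [← image_const hP i]
    exact image_congr fun j hj => h j hj
  simp [work, himage]

lemma work_le_of_forall_class_eq (hs : ∀ i, 0 ≤ s i) {P : Finset ι} {i : γ}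
    (h : ∀ j ∈ P, cl j = i) : work cl t s P ≤ ∑ j ∈ P, t j + s i := by
  rcases P.eq_empty_or_nonempty with rfl | hP
  · simp [work, hs i]
  · exact (work_of_forall_class_eq hP h).le

variable [Fintype ι] [Fintype γ] {υ : Type*} [Fintype υ]

lemma npLoad_eq_work (f : ι → υ) (u : υ) : npLoad cl t s f u = work cl t s (fiber f u) := by
  unfold npLoad work
  congr 2
  ext i
  simp [and_comm]

lemma npLoad_comp_of_injective {υ' : Type*} [Fintype υ'] {e : υ → υ'} (he : Injective e)
    (f : ι → υ) (u : υ) : npLoad cl t s (e ∘ f) (e u) = npLoad cl t s f u := by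
  rw [npLoad_eq_work, npLoad_eq_work, fiber_comp_of_injective he]

lemma sum_npLoad [DecidableEq υ] (f : ι → υ) :
    ∑ u, npLoad cl t s f u = ∑ j, t j + ∑ i, (#((fiber cl i).image f) : ℝ) * s i := by
  simp only [npLoad_eq_work, work, sum_add_distrib]
  congr 1
  · convert sum_fiberwise univ f t
    ext
    simp
  · rw [sum_comm' (t' := univ) (s' := fun i => (fiber cl i).image f)]
    · simp
    · intro u i
      simp only [mem_univ, true_and, and_true, mem_image, mem_fiber]
      exact ⟨fun ⟨j, h1, h2⟩ => ⟨j, h2, h1⟩, fun ⟨j, h1, h2⟩ => ⟨j, h2, h1⟩⟩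

end Work

section Completion

/-! A partial schedule is a map `ι → Option υ`: `none` collects the jobs not scheduled yet, so that
`npLoad cl t s f none` is the work still to be done, setups included. -/

variable {ι γ υ : Type*} [Fintype ι] [Fintype γ] [Fintype υ]
  {cl : ι → γ} {t : ι → ℝ} {s : γ → ℝ} {T : ℝ}

variable (cl t s T) in
noncomputable def spare (f : ι → Option υ) (U : Finset υ) : ℝ :=
  ∑ u ∈ U, (T - npLoad cl t s f (some u))

lemma npLoad_update_some {f : ι → Option υ} {j : ι} (hj : f j = none) (u v : υ) :
    npLoad cl t s (update f j (some u)) (some v) = npLoad cl t s f (some v) +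
      if v = u then t j + setupCost cl s (fiber f (some u)) (cl j) else 0 := by
  rw [npLoad_eq_work, npLoad_eq_work]
  split_ifs with h
  · subst h
    rw [fiber_update_self (by simp [hj]), work_insert (by simp [hj])]
    ring
  · rw [fiber_update_of_ne (by simp [hj]) (by simpa using Ne.symm h), add_zero]

lemma spare_update {f : ι → Option υ} {j : ι} (hj : f j = none) {U : Finset υ} {u : υ}
    (hu : u ∈ U) : spare cl t s T (update f j (some u)) U =
      spare cl t s T f U - (t j + setupCost cl s (fiber f (some u)) (cl j)) := by
  simp only [spare, npLoad_update_some hj, sub_add_eq_sub_sub, sum_sub_distrib, sum_ite_eq',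
    if_pos hu]

lemma spare_erase {f : ι → Option υ} {U : Finset υ} {u : υ} (hu : u ∈ U) :
    spare cl t s T f U = (T - npLoad cl t s f (some u)) + spare cl t s T f (U.erase u) :=
  (add_sum_erase U _ hu).symm

lemma exists_schedule_of_forall_ne_none {f : ι → Option υ} (hf : ∀ j, f j ≠ none) :
    ∃ F : ι → υ, ∀ u, npLoad cl t s F u = npLoad cl t s f (some u) := by
  choose F hF using fun j => Option.ne_none_iff_exists'.1 (hf j)
  obtain rfl : f = some ∘ F := funext hF
  exact ⟨F, fun u => (npLoad_comp_of_injective (Option.some_injective υ) F u).symm⟩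

/-- Next fit for one job: it goes on the current machine `u` if the load stays within `3T/2`;
otherwise `u` is closed and another machine of `U` becomes current. Closing `u` does not decrease
`spare - setupCost`, because the job not fitting means that the load of `u` exceeds
`T + s (cl j)`, or `T` if class `cl j` is not on `u`. -/
theorem exists_place_job (hs : ∀ i, 0 ≤ s i) {f : ι → Option υ} {j : ι} (hj : f j = none)
    (htj : 0 ≤ t j) (hsmall : s (cl j) + t j ≤ T / 2)
    (hload : ∀ v, npLoad cl t s f (some v) ≤ 3 / 2 * T)
    (U : Finset υ) (u : υ) (hu : u ∈ U)
    (hbudget : t j ≤ spare cl t s T f U - setupCost cl s (fiber f (some u)) (cl j)) :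
    ∃ U' : Finset υ, ∃ u' ∈ U', (∀ v, npLoad cl t s (update f j (some u')) (some v) ≤ 3 / 2 * T) ∧
      spare cl t s T f U - setupCost cl s (fiber f (some u)) (cl j) - t j ≤
        spare cl t s T (update f j (some u')) U' := by
  induction U using Finset.strongInduction generalizing u with
  | H U ih =>
    by_cases hfit : npLoad cl t s f (some u) + (t j + setupCost cl s (fiber f (some u)) (cl j)) ≤
        3 / 2 * T
    · refine ⟨U, u, hu, fun v => ?_, by rw [spare_update hj hu]; linarith⟩
      rw [npLoad_update_some hj]
      split_ifs with hv
      · rwa [hv]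
      · simpa using hload v
    rw [not_le] at hfit
    have hsetup := setupCost_le (cl := cl) hs (fiber f (some u)) (cl j)
    have hclose := spare_erase (cl := cl) (t := t) (s := s) (T := T) (f := f) hu
    obtain ⟨u', hu'⟩ : (U.erase u).Nonempty := by
      refine nonempty_of_sum_ne_zero (f := fun v => T - npLoad cl t s f (some v)) (ne_of_gt ?_)
      change 0 < spare cl t s T f (U.erase u)
      linarith [setupCost_nonneg (cl := cl) hs (fiber f (some u)) (cl j), hs (cl j)]
    have hsetup' := setupCost_le (cl := cl) hs (fiber f (some u')) (cl j)
    obtain ⟨U', u'', hu'', hload', hspare⟩ :=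
      ih (U.erase u) (erase_ssubset hu) u' hu' (by linarith)
    exact ⟨U', u'', hu'', hload', by linarith⟩

theorem exists_place_class (ht : ∀ j, 0 ≤ t j) (hs : ∀ i, 0 ≤ s i) (i : γ) (S : Finset ι) :
    ∀ (f : ι → Option υ) (U : Finset υ), ∀ u ∈ U,
      (∀ j ∈ S, cl j = i ∧ f j = none ∧ s i + t j ≤ T / 2) →
      (∀ v, npLoad cl t s f (some v) ≤ 3 / 2 * T) →
      ∑ j ∈ S, t j ≤ spare cl t s T f U - setupCost cl s (fiber f (some u)) i →
      ∃ (f' : ι → Option υ) (U' : Finset υ), (∀ j, f' j = none ↔ f j = none ∧ j ∉ S) ∧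
        (∀ v, npLoad cl t s f' (some v) ≤ 3 / 2 * T) ∧
        spare cl t s T f U - setupCost cl s (fiber f (some u)) i - ∑ j ∈ S, t j ≤
          spare cl t s T f' U' := by
  induction S using Finset.induction_on with
  | empty =>
    intro f U u _ _ hload _
    exact ⟨f, U, by simp, hload, by simpa using setupCost_nonneg (cl := cl) hs (fiber f (some u)) i⟩
  | insert a S ha ih =>
    intro f U u hu hS hload hbudget
    obtain ⟨rfl, hfa, hsmall⟩ := hS a (mem_insert_self a S)
    rw [sum_insert ha] at hbudget ⊢
    obtain ⟨U₁, u₁, hu₁, hload₁, hspare₁⟩ := exists_place_job hs hfa (ht a) hsmall hload U u hu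
      (by linarith [sum_nonneg fun j (_ : j ∈ S) => ht j])
    have hpresent : setupCost cl s (fiber (update f a (some u₁)) (some u₁)) (cl a) = 0 :=
      setupCost_eq_zero (by simp)
    obtain ⟨f', U', hpending, hload', hspare'⟩ := ih (update f a (some u₁)) U₁ u₁ hu₁
      (fun j hj => by
        obtain ⟨h1, h2, h3⟩ := hS j (mem_insert_of_mem hj)
        exact ⟨h1, by rwa [update_of_ne (ne_of_mem_of_not_mem hj ha)], h3⟩)
      hload₁ (by linarith)
    refine ⟨f', U', fun j => ?_, hload', by linarith⟩
    rw [hpending j]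
    by_cases hja : j = a
    · subst hja; simp
    · simp [hja]

theorem exists_clear_class (ht : ∀ j, 0 < t j) (hs : ∀ i, 0 ≤ s i) (i : γ) {f : ι → Option υ}
    {U : Finset υ} (hsmall : ∀ j, f j = none → s (cl j) + t j ≤ T / 2)
    (hload : ∀ v, npLoad cl t s f (some v) ≤ 3 / 2 * T)
    (hbudget : npLoad cl t s f none ≤ spare cl t s T f U) :
    ∃ (f' : ι → Option υ) (U' : Finset υ), (∀ j, f' j = none ↔ f j = none ∧ cl j ≠ i) ∧
      (∀ v, npLoad cl t s f' (some v) ≤ 3 / 2 * T) ∧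
      npLoad cl t s f' none ≤ spare cl t s T f' U' := by
  set S := (fiber f none).filter (fun j => cl j = i)
  set R := (fiber f none).filter (fun j => ¬ cl j = i)
  rcases S.eq_empty_or_nonempty with hS | hS
  · refine ⟨f, U, fun j => ⟨fun hj => ⟨hj, fun hji => ?_⟩, And.left⟩, hload, hbudget⟩
    have hjS : j ∈ S := mem_filter.2 ⟨mem_fiber.2 hj, hji⟩
    simp [hS] at hjS
  have hsplit : npLoad cl t s f none = work cl t s S + work cl t s R := by
    rw [npLoad_eq_work, ← work_union, filter_union_filter_not_eq]
    simp only [disjoint_left, mem_image, mem_filter, S, R]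
    rintro _ ⟨j, ⟨-, hj⟩, rfl⟩ ⟨j', ⟨-, hj'⟩, h⟩
    exact hj' (h.trans hj)
  have hSwork : work cl t s S = ∑ j ∈ S, t j + s i :=
    work_of_forall_class_eq hS fun j hj => (mem_filter.1 hj).2
  have hSpos : 0 < ∑ j ∈ S, t j := sum_pos (fun j _ => ht j) hS
  have hRwork := work_nonneg (cl := cl) (fun j => (ht j).le) hs R
  obtain ⟨u, hu⟩ : U.Nonempty := by
    refine nonempty_of_sum_ne_zero (f := fun v => T - npLoad cl t s f (some v)) (ne_of_gt ?_)
    change 0 < spare cl t s T f U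
    linarith [hs i]
  have hsetup := setupCost_le (cl := cl) hs (fiber f (some u)) i
  obtain ⟨f', U', hpending, hload', hspare'⟩ := exists_place_class (fun j => (ht j).le) hs i S f U u hu
    (fun j hj => by
      obtain ⟨hjf, hji⟩ := mem_filter.1 hj
      exact ⟨hji, mem_fiber.1 hjf, hji ▸ hsmall j (mem_fiber.1 hjf)⟩)
    hload (by linarith)
  have hpending' : ∀ j, f' j = none ↔ f j = none ∧ cl j ≠ i := fun j => by
    simp only [hpending, S, mem_filter, mem_fiber]
    tauto
  have hfiber : fiber f' none = R := by
    ext j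
    simp [R, hpending']
  refine ⟨f', U', hpending', hload', ?_⟩
  rw [npLoad_eq_work, hfiber]
  linarith

theorem exists_schedule_of_partial (ht : ∀ j, 0 < t j) (hs : ∀ i, 0 ≤ s i) (I : Finset γ) :
    ∀ (f : ι → Option υ) (U : Finset υ),
      (∀ j, f j = none → cl j ∈ I ∧ s (cl j) + t j ≤ T / 2) →
      (∀ v, npLoad cl t s f (some v) ≤ 3 / 2 * T) →
      npLoad cl t s f none ≤ spare cl t s T f U →
      ∃ F : ι → υ, ∀ u, npLoad cl t s F u ≤ 3 / 2 * T := by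
  induction I using Finset.induction_on with
  | empty =>
    intro f U hpending hload _
    obtain ⟨F, hF⟩ := exists_schedule_of_forall_ne_none (cl := cl) (t := t) (s := s)
      fun j hj => by simpa using (hpending j hj).1
    exact ⟨F, fun u => (hF u).trans_le (hload u)⟩
  | insert i I _ ih =>
    intro f U hpending hload hbudget
    obtain ⟨f', U', hpending', hload', hbudget'⟩ :=
      exists_clear_class ht hs i (fun j hj => (hpending j hj).2) hload hbudget
    refine ih f' U' (fun j hj => ?_) hload' hbudget'
    obtain ⟨hj, hji⟩ := (hpending' j).1 hj
    exact ⟨(mem_insert.1 (hpending j hj).1).resolve_left hji, (hpending j hj).2⟩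

end Completion

section FirstFit

variable {ι κ : Type*} [Fintype ι]

lemma exists_injective_assignment {B : Finset ι} {D : Finset κ} (h : #B ≤ #D) :
    ∃ g : ι → Option κ, (∀ j k, g j = some k → j ∈ B ∧ k ∈ D) ∧ (∀ j ∈ B, g j ≠ none) ∧
      ∀ k, #(fiber g (some k)) ≤ 1 := by
  obtain ⟨e, he⟩ := Function.Embedding.exists_of_card_le_finset (α := B) (s := D) (by simpa using h)
  refine ⟨fun j => if hj : j ∈ B then some (e ⟨j, hj⟩) else none, fun j k hjk => ?_,
    fun j hj => by simp [hj], fun k => card_le_one.2 fun a ha b hb => ?_⟩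
  · dsimp only at hjk
    split_ifs at hjk with hj
    exact ⟨hj, Option.some_inj.1 hjk ▸ he ⟨_, rfl⟩⟩
  · simp only [mem_fiber] at ha hb
    split_ifs at ha hb with ha' hb'
    exact congrArg Subtype.val
      (e.injective ((Option.some_inj.1 ha).trans (Option.some_inj.1 hb).symm))

lemma sum_sum_fiber_some_le {w : ι → ℝ} (hw : ∀ j, 0 ≤ w j) {g : ι → Option κ} (D : Finset κ)
    {X : Finset ι} (hX : ∀ j k, g j = some k → j ∈ X) :
    ∑ k ∈ D, ∑ j ∈ fiber g (some k), w j ≤ ∑ j ∈ X, w j := by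
  calc ∑ k ∈ D, ∑ j ∈ fiber g (some k), w j
      = ∑ y ∈ D.map Embedding.some, ∑ j ∈ X with g j = y, w j := by
        rw [sum_map]
        refine sum_congr rfl fun k _ => sum_congr ?_ fun _ _ => rfl
        ext j
        simpa using fun h => hX j k h
    _ ≤ ∑ j ∈ X, w j :=
        sum_fiberwise_le_sum_of_sum_fiber_nonneg fun y _ => sum_nonneg fun j _ => hw j

lemma card_mul_lt_sum_of_eq_none {w : ι → ℝ} (hw : ∀ j, 0 < w j) {g : ι → Option κ}
    {D : Finset κ} {c : ℝ} (hfull : ∀ k ∈ D, c ≤ ∑ j ∈ fiber g (some k), w j) {X : Finset ι}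
    (hX : ∀ j k, g j = some k → j ∈ X) {j₀ : ι} (hj₀ : j₀ ∈ X) (hnone : g j₀ = none) :
    #D * c < ∑ j ∈ X, w j := by
  have hlow : (#D : ℝ) * c ≤ ∑ k ∈ D, ∑ j ∈ fiber g (some k), w j := by
    simpa using card_nsmul_le_sum D _ _ hfull
  have hup := sum_sum_fiber_some_le (fun j => (hw j).le) D (X := X.erase j₀)
    fun j k h => mem_erase.2 ⟨by rintro rfl; simp [hnone] at h, hX j k h⟩
  rw [sum_erase_eq_sub hj₀] at hup
  linarith [hw j₀]

theorem exists_firstFit (w : ι → ℝ) (D : Finset κ) {c β : ℝ} (g : ι → Option κ) (S : Finset ι)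
    (hS : ∀ j ∈ S, g j = none) (hw : ∀ j ∈ S, c + w j ≤ β)
    (hg : ∀ k ∈ D, ∑ j ∈ fiber g (some k), w j ≤ β) :
    ∃ g' : ι → Option κ, (∀ j ∉ S, g' j = g j) ∧ (∀ j ∈ S, ∀ k, g' j = some k → k ∈ D) ∧
      (∀ k ∈ D, ∑ j ∈ fiber g' (some k), w j ≤ β) ∧
      ((∃ j ∈ S, g' j = none) → ∀ k ∈ D, c ≤ ∑ j ∈ fiber g' (some k), w j) := by
  induction S using Finset.induction_on with
  | empty => exact ⟨g, fun _ _ => rfl, by simp, hg, by simp⟩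
  | insert a S ha ih =>
    obtain ⟨g₁, hout, hmem, hbin, hfull⟩ :=
      ih (fun j hj => hS j (mem_insert_of_mem hj)) (fun j hj => hw j (mem_insert_of_mem hj))
    have hga : g₁ a = none := (hout a ha).trans (hS a (mem_insert_self a S))
    by_cases hopen : ∃ k ∈ D, ∑ j ∈ fiber g₁ (some k), w j < c
    · obtain ⟨k, hkD, hk⟩ := hopen
      refine ⟨update g₁ a (some k), fun j hj => ?_, fun j hj k' hk' => ?_, fun k' hk'D => ?_, ?_⟩
      · obtain ⟨hja, hjS⟩ := not_or.1 (mem_insert.not.1 hj)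
        rw [update_of_ne hja]
        exact hout j hjS
      · by_cases hja : j = a
        · subst hja
          simp only [update_self, Option.some_inj] at hk'
          exact hk' ▸ hkD
        · rw [update_of_ne hja] at hk'
          exact hmem j ((mem_insert.1 hj).resolve_left hja) k' hk'
      · by_cases hkk : k' = k
        · subst hkk
          rw [fiber_update_self (by simp [hga]), sum_insert (by simp [hga])]
          linarith [hw a (mem_insert_self a S)]
        · rw [fiber_update_of_ne (by simp [hga]) (by simpa using Ne.symm hkk)]
          exact hbin k' hk'D
      · rintro ⟨j, hj, hjn⟩
        have hja : j ≠ a := by rintro rfl; simp at hjn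
        rw [update_of_ne hja] at hjn
        linarith [hfull ⟨j, (mem_insert.1 hj).resolve_left hja, hjn⟩ k hkD]
    · simp only [not_exists, not_and, not_lt] at hopen
      refine ⟨g₁, fun j hj => hout j fun h => hj (mem_insert_of_mem h), fun j hj k hk => ?_, hbin,
        fun _ => hopen⟩
      rcases mem_insert.1 hj with rfl | hj
      · simp [hga] at hk
      · exact hmem j hj k hk

end FirstFit

section ClassPacking

variable {ι γ υ : Type*} [Fintype ι] {cl : ι → γ} {t : ι → ℝ} {s : γ → ℝ} {T : ℝ}

variable (cl t T) in
noncomputable def bigJobs (i : γ) : Finset ι := univ.filter (fun j => cl j = i ∧ T / 2 < t j)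

variable (cl t s T) in
noncomputable def mediumJobs (i : γ) : Finset ι :=
  univ.filter (fun j => cl j = i ∧ t j ≤ T / 2 ∧ T / 2 < s i + t j)

lemma mem_bigJobs_union_mediumJobs {i : γ} (hs : 0 ≤ s i) {j : ι} :
    j ∈ bigJobs cl t T i ∪ mediumJobs cl t s T i ↔ cl j = i ∧ T / 2 < s i + t j := by
  simp only [bigJobs, mediumJobs, mem_union, mem_filter, mem_univ, true_and]
  constructor
  · rintro (⟨hj, h⟩ | ⟨hj, -, h⟩) <;> exact ⟨hj, by linarith⟩
  · rintro ⟨hj, h⟩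
    by_cases hbig : T / 2 < t j
    · exact Or.inl ⟨hj, hbig⟩
    · exact Or.inr ⟨hj, not_lt.1 hbig, h⟩

lemma ceil_mediumJobs_nonneg (ht : ∀ j, 0 ≤ t j) (hst : ∀ j, s (cl j) + t j ≤ T) (i : γ) :
    0 ≤ ⌈(∑ j ∈ mediumJobs cl t s T i, t j) / (T - s i)⌉ := by
  refine Int.ceil_nonneg ?_
  rcases (mediumJobs cl t s T i).eq_empty_or_nonempty with h | ⟨j, hj⟩
  · simp [h]
  · obtain ⟨rfl, -⟩ := (mem_filter.1 hj).2
    exact div_nonneg (sum_nonneg fun j _ => ht j) (by linarith [hst j, ht j])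

variable [Fintype γ]

variable (cl t s T) in
/-- The paper's `x_i`. -/
noncomputable def excess (i : γ) : ℝ := ∑ j ∈ fiber cl i, t j - mReq cl t s T i * (T - s i)

variable (cl t s T) in
/-- The paper's `L_nonp`. -/
noncomputable def Lnonp : ℝ :=
  ∑ j, t j + ∑ i, (mReq cl t s T i : ℝ) * s i +
    ∑ i ∈ univ.filter (fun i => 0 < excess cl t s T i), s i

/-- When `s i > T/2`, every job of class `i` is medium and none is big, so both cases of the
definition of `m_i` read the same. -/
lemma mReq_eq (ht : ∀ j, 0 ≤ t j) (hst : ∀ j, s (cl j) + t j ≤ T) (i : γ) :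
    mReq cl t s T i =
      #(bigJobs cl t T i) + ⌈(∑ j ∈ mediumJobs cl t s T i, t j) / (T - s i)⌉ := by
  unfold mReq
  split_ifs with h
  · have hbig : bigJobs cl t T i = ∅ := filter_eq_empty_iff.2 fun j _ ⟨hj, hjt⟩ => by
      linarith [hj ▸ hst j]
    have hmed : mediumJobs cl t s T i = fiber cl i := filter_congr fun j _ =>
      ⟨fun h => h.1, fun hj => ⟨hj, by linarith [hj ▸ hst j], by linarith [ht j]⟩⟩
    simp [hbig, hmed, fiber]
  · rfl

lemma mReq_nonneg (ht : ∀ j, 0 ≤ t j) (hst : ∀ j, s (cl j) + t j ≤ T) (i : γ) :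
    0 ≤ mReq cl t s T i := by
  rw [mReq_eq ht hst]
  exact add_nonneg (Int.natCast_nonneg _) (ceil_mediumJobs_nonneg ht hst i)

lemma card_bigJobs_le_mReq (ht : ∀ j, 0 ≤ t j) (hst : ∀ j, s (cl j) + t j ≤ T) (i : γ) :
    (#(bigJobs cl t T i) : ℤ) ≤ mReq cl t s T i := by
  rw [mReq_eq ht hst]
  linarith [ceil_mediumJobs_nonneg ht hst i]

lemma sum_bigJobs_union_mediumJobs_le (ht : ∀ j, 0 ≤ t j) (hst : ∀ j, s (cl j) + t j ≤ T)
    {i : γ} (hc : 0 < T - s i) :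
    ∑ j ∈ bigJobs cl t T i ∪ mediumJobs cl t s T i, t j ≤ mReq cl t s T i * (T - s i) := by
  set B := bigJobs cl t T i
  set N := mediumJobs cl t s T i
  have hdisj : Disjoint B N := disjoint_left.2 fun j hB hN => by
    linarith [(mem_filter.1 hB).2.2, (mem_filter.1 hN).2.2.1]
  have hB : ∑ j ∈ B, t j ≤ #B * (T - s i) := by
    simpa using sum_le_card_nsmul B t _ fun j hj => by linarith [(mem_filter.1 hj).2.1 ▸ hst j]
  have hN : ∑ j ∈ N, t j ≤ ⌈(∑ j ∈ N, t j) / (T - s i)⌉ * (T - s i) := by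
    calc ∑ j ∈ N, t j = (∑ j ∈ N, t j) / (T - s i) * (T - s i) := by field_simp
      _ ≤ _ := mul_le_mul_of_nonneg_right (Int.le_ceil _) hc.le
  rw [sum_union hdisj, mReq_eq ht hst]
  push_cast
  linarith

lemma Lnonp_nonneg (ht : ∀ j, 0 ≤ t j) (hs : ∀ i, 0 ≤ s i) (hst : ∀ j, s (cl j) + t j ≤ T) :
    0 ≤ Lnonp cl t s T := by
  have hm : ∀ i, (0 : ℝ) ≤ mReq cl t s T i := fun i => by exact_mod_cast mReq_nonneg ht hst i
  unfold Lnonp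
  have := sum_nonneg fun j (_ : j ∈ univ) => ht j
  have := sum_nonneg fun i (_ : i ∈ univ) => mul_nonneg (hm i) (hs i)
  have := sum_nonneg fun i (_ : i ∈ univ.filter (fun i => 0 < excess cl t s T i)) => hs i
  linarith

/-- A medium job left over by first fit would leave every one of the `m_i` machines holding at
least `T - s i`, more than the big and medium jobs of the class can fill. -/
theorem exists_big_medium_packing (ht : ∀ j, 0 < t j) (hs : ∀ i, 0 ≤ s i)
    (hst : ∀ j, s (cl j) + t j ≤ T) {i : γ} (hc : 0 < T - s i) (D : Finset υ)
    (hD : (#D : ℤ) = mReq cl t s T i) :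
    ∃ g : ι → Option υ,
      (∀ j u, g j = some u → j ∈ bigJobs cl t T i ∪ mediumJobs cl t s T i ∧ u ∈ D) ∧
      (∀ j ∈ bigJobs cl t T i ∪ mediumJobs cl t s T i, g j ≠ none) ∧
      ∀ u ∈ D, ∑ j ∈ fiber g (some u), t j ≤ 3 / 2 * T - s i := by
  set B := bigJobs cl t T i
  set N := mediumJobs cl t s T i
  have ht' : ∀ j, 0 ≤ t j := fun j => (ht j).le
  obtain ⟨g₀, hg₀, hB₀, hone⟩ := exists_injective_assignment (B := B) (D := D) (by
    have : (#B : ℤ) ≤ mReq cl t s T i := card_bigJobs_le_mReq ht' hst i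
    omega)
  have hbin₀ : ∀ u ∈ D, ∑ j ∈ fiber g₀ (some u), t j ≤ 3 / 2 * T - s i := fun u _ => by
    have h1 := sum_le_card_nsmul _ t (T - s i) fun j hj => by
      linarith [(mem_filter.1 (hg₀ j u (mem_fiber.1 hj)).1).2.1 ▸ hst j]
    have h2 : (#(fiber g₀ (some u)) : ℝ) ≤ 1 := by exact_mod_cast hone u
    rw [nsmul_eq_mul] at h1
    nlinarith [hs i]
  have hN₀ : ∀ j ∈ N, g₀ j = none := fun j hj => Option.eq_none_iff_forall_ne_some.2 fun u hu => by
    linarith [(mem_filter.1 (hg₀ j u hu).1).2.2, (mem_filter.1 hj).2.2.1]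
  obtain ⟨g₁, hout, hmem, hbin₁, hfull⟩ := exists_firstFit t D (c := T - s i) g₀ N hN₀
    (fun j hj => by linarith [(mem_filter.1 hj).2.2.1]) hbin₀
  have hg₁ : ∀ j u, g₁ j = some u → j ∈ B ∪ N ∧ u ∈ D := fun j u h => by
    by_cases hjN : j ∈ N
    · exact ⟨mem_union_right _ hjN, hmem j hjN u h⟩
    · rw [hout j hjN] at h
      exact ⟨mem_union_left _ (hg₀ j u h).1, (hg₀ j u h).2⟩
  have hN₁ : ∀ j ∈ N, g₁ j ≠ none := fun j hj hnone => by
    have hlt := card_mul_lt_sum_of_eq_none ht (hfull ⟨j, hj, hnone⟩) (fun j u h => (hg₁ j u h).1)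
      (mem_union_right _ hj) hnone
    have hcap : ∑ j ∈ B ∪ N, t j ≤ mReq cl t s T i * (T - s i) :=
      sum_bigJobs_union_mediumJobs_le ht' hst hc
    have hD' : (#D : ℝ) = mReq cl t s T i := by exact_mod_cast hD
    rw [hD'] at hlt
    linarith
  refine ⟨g₁, hg₁, fun j hj => ?_, hbin₁⟩
  by_cases hjN : j ∈ N
  · exact hN₁ j hjN
  · rw [hout j hjN]
    exact hB₀ j ((mem_union.1 hj).resolve_right hjN)

theorem exists_class_packing (ht : ∀ j, 0 < t j) (hs : ∀ i, 0 ≤ s i)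
    (hst : ∀ j, s (cl j) + t j ≤ T) (i : γ) (D : Finset υ) (hD : (#D : ℤ) = mReq cl t s T i) :
    ∃ g : ι → Option υ, (∀ j u, g j = some u → cl j = i ∧ u ∈ D) ∧
      (∀ u ∈ D, ∑ j ∈ fiber g (some u), t j ≤ 3 / 2 * T - s i) ∧
      (∀ j, cl j = i → g j = none → s i + t j ≤ T / 2) ∧
      ((∃ j, cl j = i ∧ g j = none) → 0 < excess cl t s T i) := by
  rcases (fiber cl i).eq_empty_or_nonempty with hempty | ⟨j₀, hj₀⟩
  · have hjobs : ∀ j, cl j ≠ i := fun j hj => by simpa [hempty] using mem_fiber.2 hj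
    have hD0 : D = ∅ := by
      have hB : bigJobs cl t T i = ∅ := filter_eq_empty_iff.2 fun j _ h => hjobs j h.1
      have hN : mediumJobs cl t s T i = ∅ := filter_eq_empty_iff.2 fun j _ h => hjobs j h.1
      rw [mReq_eq (fun j => (ht j).le) hst, hB, hN] at hD
      simpa using hD
    exact ⟨fun _ => none, by simp, by simp [hD0], fun j hj => absurd hj (hjobs j),
      fun ⟨j, hj, _⟩ => absurd hj (hjobs j)⟩
  have hc : 0 < T - s i := by
    linarith [ht j₀, mem_fiber.1 hj₀ ▸ hst j₀]
  obtain ⟨g₁, hg₁, hBN, hbin₁⟩ := exists_big_medium_packing ht hs hst hc D hD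
  set Sm := (fiber cl i).filter (fun j => s i + t j ≤ T / 2)
  have hSm : ∀ j ∈ Sm, g₁ j = none := fun j hj => Option.eq_none_iff_forall_ne_some.2 fun u hu => by
    linarith [(mem_filter.1 hj).2, ((mem_bigJobs_union_mediumJobs (hs i)).1 (hg₁ j u hu).1).2]
  obtain ⟨g, hout, hmem, hbin, hfull⟩ := exists_firstFit t D (c := T - s i) g₁ Sm hSm
    (fun j hj => by linarith [(mem_filter.1 hj).2, hs i]) hbin₁
  have hg : ∀ j u, g j = some u → cl j = i ∧ u ∈ D := fun j u h => by
    by_cases hjSm : j ∈ Sm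
    · exact ⟨mem_fiber.1 (mem_filter.1 hjSm).1, hmem j hjSm u h⟩
    · rw [hout j hjSm] at h
      exact ⟨((mem_bigJobs_union_mediumJobs (hs i)).1 (hg₁ j u h).1).1, (hg₁ j u h).2⟩
  have hleft : ∀ j, cl j = i → g j = none → j ∈ Sm := fun j hj hnone => by
    by_contra hjSm
    rw [hout j hjSm] at hnone
    refine hBN j ((mem_bigJobs_union_mediumJobs (hs i)).2 ⟨hj, ?_⟩) hnone
    simpa [Sm, hj] using hjSm
  refine ⟨g, hg, hbin, fun j hj hnone => (mem_filter.1 (hleft j hj hnone)).2, ?_⟩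
  rintro ⟨j, hj, hnone⟩
  have hlt := card_mul_lt_sum_of_eq_none ht (hfull ⟨j, hleft j hj hnone, hnone⟩)
    (fun j' u h => mem_fiber.2 (hg j' u h).1) (mem_fiber.2 hj) hnone
  have hD' : (#D : ℝ) = mReq cl t s T i := by exact_mod_cast hD
  rw [hD'] at hlt
  unfold excess
  linarith

end ClassPacking

lemma exists_pairwise_disjoint_card_eq {γ υ : Type*} [Fintype γ] [Fintype υ] (n : γ → ℕ)
    (h : ∑ i, n i ≤ Fintype.card υ) :
    ∃ D : γ → Finset υ, (∀ i, #(D i) = n i) ∧ Pairwise (Disjoint on D) := by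
  obtain ⟨φ⟩ := Function.Embedding.nonempty_of_card_le (α := Σ i, Fin (n i)) (β := υ)
    (by simpa using h)
  refine ⟨fun i => univ.map ((Embedding.sigmaMk i).trans φ), fun i => by simp, fun i i' hii' => ?_⟩
  simp only [onFun, disjoint_left, mem_map, mem_univ, true_and, Embedding.trans_apply,
    Embedding.sigmaMk_apply]
  rintro _ ⟨k, rfl⟩ ⟨k', hk'⟩
  exact hii' (congrArg Sigma.fst (φ.injective hk')).symm

section Assembly

variable {ι γ υ : Type*} [Fintype ι]
  {cl : ι → γ} {t : ι → ℝ} {s : γ → ℝ} {T : ℝ} {D : γ → Finset υ} {g : γ → ι → Option υ}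

lemma card_image_fiber_le (hg : ∀ i j u, g i j = some u → cl j = i ∧ u ∈ D i) (i : γ) :
    #((fiber cl i).image fun j => g (cl j) j) ≤
      #(D i) + if ∃ j, cl j = i ∧ g i j = none then 1 else 0 := by
  have hsub :
      (fiber cl i).image (fun j => g (cl j) j) ⊆ insert none ((D i).map Embedding.some) := by
    intro v hv
    obtain ⟨j, hj, rfl⟩ := mem_image.1 hv
    cases h : g (cl j) j with
    | none => simp
    | some u => simp [mem_fiber.1 hj ▸ (hg (cl j) j u h).2]
  split_ifs with hn
  · simpa using (card_le_card hsub).trans (card_insert_le _ _)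
  · have hnone : none ∉ (fiber cl i).image (fun j => g (cl j) j) := fun h => by
      obtain ⟨j, hj, hjn⟩ := mem_image.1 h
      exact hn ⟨j, mem_fiber.1 hj, mem_fiber.1 hj ▸ hjn⟩
    simpa using card_le_card ((subset_insert_iff_of_notMem hnone).1 hsub)

variable [Fintype γ] [Fintype υ]

lemma npLoad_comp_class_le (hs : ∀ i, 0 ≤ s i) (hT : 0 ≤ T) (hD : Pairwise (Disjoint on D))
    (hg : ∀ i j u, g i j = some u → cl j = i ∧ u ∈ D i)
    (hbin : ∀ i, ∀ u ∈ D i, ∑ j ∈ fiber (g i) (some u), t j ≤ 3 / 2 * T - s i) (u : υ) :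
    npLoad cl t s (fun j => g (cl j) j) (some u) ≤ 3 / 2 * T := by
  set f : ι → Option υ := fun j => g (cl j) j
  have hf : ∀ {j}, j ∈ fiber f (some u) → g (cl j) j = some u := fun hj => (mem_fiber (f := f)).1 hj
  rw [npLoad_eq_work]
  by_cases hu : ∃ i, u ∈ D i
  · obtain ⟨i, hui⟩ := hu
    have hcl : ∀ j ∈ fiber f (some u), cl j = i := fun j hj => by
      by_contra hji
      exact disjoint_left.1 (hD hji) (hg (cl j) j u (hf hj)).2 hui
    have hfiber : fiber f (some u) = fiber (g i) (some u) := by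
      ext j
      refine ⟨fun hj => ?_, fun hj => ?_⟩
      · rw [mem_fiber, ← hcl j hj]
        exact hf hj
      · have hji := (hg i j u (mem_fiber.1 hj)).1
        rw [mem_fiber] at hj ⊢
        show g (cl j) j = some u
        rwa [hji]
    calc work cl t s (fiber f (some u)) ≤ ∑ j ∈ fiber f (some u), t j + s i :=
          work_le_of_forall_class_eq hs hcl
      _ ≤ 3 / 2 * T := by rw [hfiber]; linarith [hbin i u hui]
  · have hempty : fiber f (some u) = ∅ :=
      eq_empty_of_forall_notMem fun j hj => hu ⟨cl j, (hg _ j u (hf hj)).2⟩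
    simp only [hempty, work, sum_empty, image_empty, add_zero]
    linarith

theorem exists_partial_schedule (ht : ∀ j, 0 < t j) (hs : ∀ i, 0 ≤ s i) (hT : 0 ≤ T)
    (hst : ∀ j, s (cl j) + t j ≤ T) (hm : ∑ i, mReq cl t s T i ≤ Fintype.card υ) :
    ∃ f : ι → Option υ, (∀ u, npLoad cl t s f (some u) ≤ 3 / 2 * T) ∧
      (∀ j, f j = none → s (cl j) + t j ≤ T / 2) ∧ ∑ v, npLoad cl t s f v ≤ Lnonp cl t s T := by
  have hm0 := mReq_nonneg (fun j => (ht j).le) hst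
  obtain ⟨D, hDcard, hDdisj⟩ :=
    exists_pairwise_disjoint_card_eq (fun i => (mReq cl t s T i).toNat) (by
      have : ((∑ i, (mReq cl t s T i).toNat : ℕ) : ℤ) ≤ Fintype.card υ := by
        push_cast [Int.toNat_of_nonneg (hm0 _)]
        exact hm
      exact_mod_cast this)
  have hD : ∀ i, (#(D i) : ℝ) = mReq cl t s T i := fun i => by
    rw [hDcard]
    exact_mod_cast Int.toNat_of_nonneg (hm0 i)
  choose g hg hbin hsmall hleft using fun i =>
    exists_class_packing ht hs hst i (D i) (by exact_mod_cast hD i)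
  refine ⟨fun j => g (cl j) j, npLoad_comp_class_le hs hT hDdisj hg hbin,
    fun j hj => hsmall (cl j) j rfl hj, ?_⟩
  have hhosts : ∀ i, (#((fiber cl i).image fun j => g (cl j) j) : ℝ) * s i ≤
      mReq cl t s T i * s i + if 0 < excess cl t s T i then s i else 0 := fun i => by
    have hcard := card_image_fiber_le hg i
    split_ifs at hcard with hn
    · have hcard' : (#((fiber cl i).image fun j => g (cl j) j) : ℝ) ≤ #(D i) + 1 := by
        exact_mod_cast hcard
      rw [if_pos (hleft i hn)]
      nlinarith [hs i, hD i]
    · have hcard' : (#((fiber cl i).image fun j => g (cl j) j) : ℝ) ≤ #(D i) := by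
        exact_mod_cast hcard
      split_ifs <;> nlinarith [hs i, hD i]
  have := sum_le_sum fun i (_ : i ∈ univ) => hhosts i
  rw [sum_add_distrib, ← sum_filter] at this
  rw [sum_npLoad, Lnonp, add_assoc]
  exact (add_le_add_iff_left _).2 this

end Assembly

end BatchSetup

open BatchSetup

theorem np_dual_approximation_general {υ γ ι : Type*} [Fintype υ] [Fintype γ] [Fintype ι]
    [Nonempty υ]
    (cl : ι → γ) (t : ι → ℝ) (s : γ → ℝ)
    (ht : ∀ j, 0 < t j) (hs : ∀ i, 0 < s i)
    (T : ℝ)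
    (hst : ∀ j : ι, s (cl j) + t j ≤ T)
    (hL : ((∑ j, t j) + (∑ i : γ, (mReq cl t s T i : ℝ) * s i) +
      (∑ i ∈ univ.filter (fun i : γ =>
        0 < (∑ j ∈ univ.filter (fun j => cl j = i), t j) -
          (mReq cl t s T i : ℝ) * (T - s i)), s i))
      ≤ (Fintype.card υ : ℝ) * T)
    (hm : (∑ i : γ, mReq cl t s T i) ≤ (Fintype.card υ : ℤ)) :
    ∃ f : ι → υ, npMakespan cl t s f ≤ 3 / 2 * T := by
  have hs' : ∀ i, 0 ≤ s i := fun i => (hs i).le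
  have hLnonp : Lnonp cl t s T ≤ Fintype.card υ * T := hL
  have hT : 0 ≤ T := nonneg_of_mul_nonneg_right
    ((Lnonp_nonneg (fun j => (ht j).le) hs' hst).trans hLnonp) (by exact_mod_cast Fintype.card_pos)
  obtain ⟨f₀, hload, hsmall, htotal⟩ := exists_partial_schedule ht hs' hT hst hm
  have hbudget : npLoad cl t s f₀ none ≤ spare cl t s T f₀ univ := by
    rw [Fintype.sum_option] at htotal
    simp only [spare, sum_sub_distrib, sum_const, card_univ, nsmul_eq_mul]
    linarith
  obtain ⟨F, hF⟩ := exists_schedule_of_partial ht hs' univ f₀ univ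
    (fun j hj => ⟨mem_univ _, hsmall j hj⟩) hload hbudget
  exact ⟨F, sup'_le _ _ fun u _ => hF u⟩

/-- Theorem 3.4 (ii): if `T ≥ s_i + t_j` for all jobs, `m·T ≥ L_nonp` and `m ≥ m'`, then
there is a non-preemptive schedule with makespan at most `(3/2)·T`. -/
theorem np_dual_approximation {υ γ ι : Type*} [Fintype υ] [Fintype γ] [Fintype ι]
    [Nonempty υ]
    (cl : ι → γ) (t : ι → ℝ) (s : γ → ℝ)
    (ht : ∀ j, 0 < t j) (hs : ∀ i, 0 < s i)
    (hcl : ∀ i : γ, ∃ j, cl j = i)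
    (T : ℝ)
    (hst : ∀ j : ι, s (cl j) + t j ≤ T)
    (hL : ((∑ j, t j) + (∑ i : γ, (mReq cl t s T i : ℝ) * s i) +
      (∑ i ∈ univ.filter (fun i : γ =>
        0 < (∑ j ∈ univ.filter (fun j => cl j = i), t j) -
          (mReq cl t s T i : ℝ) * (T - s i)), s i))
      ≤ (Fintype.card υ : ℝ) * T)
    (hm : (∑ i : γ, mReq cl t s T i) ≤ (Fintype.card υ : ℤ)) :
    ∃ f : ι → υ, npMakespan cl t s f ≤ 3 / 2 * T :=
  np_dual_approximation_general cl t s ht hs T hst hL hm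
end

section
/- (Lemma A.2, 2-approximation for the non-preemptive case.) Let T_min = max{ N/m, max_i (s_i + max_{j∈C_i} t_j) }. Then there exists a non-preemptive schedule whose makespan is at most 2·T_min. Since every non-preemptive schedule has makespan at least T_min, this constitutes a factor-2 approximation of the optimal non-preemptive (and hence also preemptive) makespan. -/
open Classical Finset

/-- The wrap-around construction: there is a schedule with makespan at most `2L`
provided `N ≤ m·L` and every setup-plus-job fits in `L`. -/
lemma np_exists_schedule {υ γ ι : Type*} [Fintype υ] [Fintype γ] [Fintype ι]
    [Nonempty υ]
    (cl : ι → γ) (t : ι → ℝ) (s : γ → ℝ)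
    (ht : ∀ j, 0 < t j) (hs : ∀ i, 0 < s i)
    (L : ℝ) (hL : 0 < L)
    (hN : (∑ i, s i) + (∑ j, t j) ≤ (Fintype.card υ : ℝ) * L)
    (hjob : ∀ j, s (cl j) + t j ≤ L) :
    ∃ f : ι → υ, npMakespan cl t s f ≤ 2 * L := by
  classical
  set m := Fintype.card υ with hm
  set n := Fintype.card ι with hn
  set cIdx : γ → ℕ := fun i => ((Fintype.equivFin γ) i : ℕ) with hcIdx
  set jIdx : ι → ℕ := fun j => ((Fintype.equivFin ι) j : ℕ) with hjIdxdef
  set key : ι → ℕ := fun j => cIdx (cl j) * n + jIdx j with hkeydef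
  have hjlt : ∀ j, jIdx j < n := fun j => (Fintype.equivFin ι j).isLt
  -- key respects the class order
  have hkey_c : ∀ j j', key j ≤ key j' → cIdx (cl j) ≤ cIdx (cl j') := by
    intro j j' h
    by_contra hc
    push_neg at hc
    have hc' : cIdx (cl j') + 1 ≤ cIdx (cl j) := hc
    have h2 : (cIdx (cl j') + 1) * n ≤ cIdx (cl j) * n := Nat.mul_le_mul_right _ hc'
    rw [add_mul, one_mul] at h2
    have h3 := hjlt j'
    simp only [hkeydef] at h
    linarith
  have hγinj : ∀ i i', cIdx i = cIdx i' → i = i' := by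
    intro i i' h
    exact (Fintype.equivFin γ).injective (Fin.ext h)
  have hkey_inj : Function.Injective key := by
    intro j j' h
    have hc : cIdx (cl j) = cIdx (cl j') :=
      le_antisymm (hkey_c j j' h.le) (hkey_c j' j h.ge)
    simp only [hkeydef, hc] at h
    have : jIdx j = jIdx j' := Nat.add_left_cancel h
    exact (Fintype.equivFin ι).injective (Fin.ext this)
  have hbetween : ∀ j'' p j, key j'' ≤ key p → key p ≤ key j → cl j'' = cl j → cl p = cl j := by
    intro j'' p j h1 h2 h3
    have c1 := hkey_c _ _ h1
    have c2 := hkey_c _ _ h2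
    rw [h3] at c1
    exact hγinj _ _ (le_antisymm c2 c1)
  -- start and end positions in the master sequence
  set b : ι → ℝ := fun j =>
    (∑ j' ∈ univ.filter (fun j' => key j' < key j), t j') +
    (∑ i ∈ univ.filter (fun i => ∃ j', cl j' = i ∧ key j' ≤ key j), s i) with hbdef
  set e : ι → ℝ := fun j => b j + t j with hedef
  have hb_nonneg : ∀ j, 0 ≤ b j := by
    intro j
    apply add_nonneg
    · exact sum_nonneg fun x _ => (ht x).le
    · exact sum_nonneg fun x _ => (hs x).le
  have he_pos : ∀ j, 0 < e j := fun j => add_pos_of_nonneg_of_pos (hb_nonneg j) (ht j)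
  have he_le : ∀ j, e j ≤ (m : ℝ) * L := by
    intro j
    have hnot : j ∉ univ.filter (fun j' => key j' < key j) := by simp
    have h1 : t j + (∑ j' ∈ univ.filter (fun j' => key j' < key j), t j') ≤ ∑ j', t j' := by
      rw [← Finset.sum_insert hnot]
      exact Finset.sum_le_sum_of_subset_of_nonneg (subset_univ _) (fun i _ _ => (ht i).le)
    have h2 : (∑ i ∈ univ.filter (fun i => ∃ j', cl j' = i ∧ key j' ≤ key j), s i) ≤ ∑ i, s i :=
      Finset.sum_le_sum_of_subset_of_nonneg (filter_subset _ _) (fun i _ _ => (hs i).le)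
    simp only [hedef, hbdef]
    linarith
  have hceil1 : ∀ j, 1 ≤ ⌈e j / L⌉₊ := fun j =>
    Nat.one_le_ceil_iff.mpr (div_pos (he_pos j) hL)
  have hceilm : ∀ j, ⌈e j / L⌉₊ ≤ m := fun j =>
    Nat.ceil_le.mpr ((div_le_iff₀ hL).mpr (he_le j))
  set f : ι → υ := fun j => (Fintype.equivFin υ).symm
    ⟨⌈e j / L⌉₊ - 1, by have := hceil1 j; have := hceilm j; omega⟩ with hfdef
  have hf : ∀ j u, f j = u →
      ((Fintype.equivFin υ u : ℕ) : ℝ) * L < e j ∧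
      e j ≤ ((Fintype.equivFin υ u : ℕ) : ℝ) * L + L := by
    intro j u hju
    have h1 : ⌈e j / L⌉₊ - 1 = ((Fintype.equivFin υ) u : ℕ) := by
      have h0 := congrArg (Fintype.equivFin υ) hju
      simp only [hfdef, Equiv.apply_symm_apply] at h0
      exact congrArg Fin.val h0
    set k := ((Fintype.equivFin υ) u : ℕ) with hk
    have h2 : ⌈e j / L⌉₊ = k + 1 := by have := hceil1 j; omega
    have h3 := (Nat.ceil_eq_iff (Nat.succ_ne_zero k)).mp h2
    have h4 : (k : ℝ) < e j / L := by
      have := h3.1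
      simpa using this
    have h5 : e j / L ≤ (k : ℝ) + 1 := by exact_mod_cast h3.2
    constructor
    · exact (lt_div_iff₀ hL).mp h4
    · have := (div_le_iff₀ hL).mp h5
      linarith [this]
  refine ⟨f, ?_⟩
  apply Finset.sup'_le
  intro u _
  set A := univ.filter (fun j => f j = u) with hA
  by_cases hAne : A.Nonempty
  · obtain ⟨p, hpA, hp⟩ := Finset.exists_min_image A key hAne
    obtain ⟨q, hqA, hq⟩ := Finset.exists_max_image A key hAne
    have hpq : key p ≤ key q := hp q hqA
    have hfp : f p = u := (mem_filter.mp hpA).2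
    have hfq : f q = u := (mem_filter.mp hqA).2
    obtain ⟨hep, -⟩ := hf p u hfp
    obtain ⟨-, heq⟩ := hf q u hfq
    set T1 := ∑ j' ∈ univ.filter (fun j' => key j' < key p), t j' with hT1
    set T2 := ∑ j' ∈ univ.filter (fun j' => key j' < key q), t j' with hT2
    set Dp := univ.filter (fun i => ∃ j', cl j' = i ∧ key j' ≤ key p) with hDp
    set Dq := univ.filter (fun i => ∃ j', cl j' = i ∧ key j' ≤ key q) with hDq
    set Sp := ∑ i ∈ Dp, s i with hSp
    set Sq := ∑ i ∈ Dq, s i with hSq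
    -- the t-sum identity
    have hsubt : univ.filter (fun j' => key j' < key p) ⊆ univ.filter (fun j' => key j' < key q) := by
      intro x hx
      simp only [mem_filter, mem_univ, true_and] at hx ⊢
      omega
    have hdiff : univ.filter (fun j' => key j' < key q) \ univ.filter (fun j' => key j' < key p)
        = univ.filter (fun j' => key p ≤ key j' ∧ key j' < key q) := by
      ext x
      simp only [mem_sdiff, mem_filter, mem_univ, true_and]
      omega
    have hmid : ∑ j' ∈ univ.filter (fun j' => key p ≤ key j' ∧ key j' < key q), t j'
        = T2 - T1 := by
      rw [← hdiff, Finset.sum_sdiff_eq_sub hsubt]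
    have hqnot : q ∉ univ.filter (fun j' => key p ≤ key j' ∧ key j' < key q) := by simp
    have hins : univ.filter (fun j' => key p ≤ key j' ∧ key j' ≤ key q)
        = insert q (univ.filter (fun j' => key p ≤ key j' ∧ key j' < key q)) := by
      ext x
      simp only [mem_insert, mem_filter, mem_univ, true_and]
      constructor
      · rintro ⟨h1, h2⟩
        rcases eq_or_lt_of_le h2 with h3 | h3
        · exact Or.inl (hkey_inj h3)
        · exact Or.inr ⟨h1, h3⟩
      · rintro (rfl | ⟨h1, h2⟩)
        · exact ⟨hpq, le_refl _⟩
        · exact ⟨h1, h2.le⟩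
    have hI1 : ∑ j' ∈ univ.filter (fun j' => key p ≤ key j' ∧ key j' ≤ key q), t j'
        = t q + T2 - T1 := by
      rw [hins, Finset.sum_insert hqnot, hmid]; ring
    -- the s-sum identity
    have hsubD : Dp ⊆ Dq := by
      intro i hi
      simp only [hDp, hDq, mem_filter, mem_univ, true_and] at hi ⊢
      obtain ⟨j', hj1, hj2⟩ := hi
      exact ⟨j', hj1, hj2.trans hpq⟩
    have hI3 : ∑ i ∈ Dq \ Dp, s i = Sq - Sp := Finset.sum_sdiff_eq_sub hsubD
    -- subset facts
    have hAsub : A ⊆ univ.filter (fun j' => key p ≤ key j' ∧ key j' ≤ key q) := by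
      intro x hx
      simp only [mem_filter, mem_univ, true_and]
      exact ⟨hp x hx, hq x hx⟩
    have hclp_Dp : cl p ∈ Dp := by
      simp only [hDp, mem_filter, mem_univ, true_and]
      exact ⟨p, rfl, le_refl _⟩
    have hclp_not : cl p ∉ Dq \ Dp := fun h => (mem_sdiff.mp h).2 hclp_Dp
    have hclsub : univ.filter (fun i => ∃ j, cl j = i ∧ f j = u) ⊆ insert (cl p) (Dq \ Dp) := by
      intro i hi
      simp only [mem_filter, mem_univ, true_and] at hi
      obtain ⟨j, hji, hju⟩ := hi
      have hjA : j ∈ A := by simp only [hA, mem_filter, mem_univ, true_and]; exact hju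
      by_cases hip : i = cl p
      · exact hip ▸ mem_insert_self _ _
      · apply mem_insert_of_mem
        rw [mem_sdiff]
        constructor
        · simp only [hDq, mem_filter, mem_univ, true_and]
          exact ⟨j, hji, hq j hjA⟩
        · simp only [hDp, mem_filter, mem_univ, true_and]
          rintro ⟨j', hj'1, hj'2⟩
          exact hip (((hbetween j' p j hj'2 (hp j hjA) (hj'1.trans hji.symm)).trans hji).symm)
    -- assemble
    have hload : npLoad cl t s f u ≤ (t q + T2 - T1) + (s (cl p) + (Sq - Sp)) := by
      simp only [npLoad]
      apply add_le_add
      · rw [← hI1]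
        exact Finset.sum_le_sum_of_subset_of_nonneg hAsub (fun i _ _ => (ht i).le)
      · rw [← hI3, ← Finset.sum_insert hclp_not]
        exact Finset.sum_le_sum_of_subset_of_nonneg hclsub (fun i _ _ => (hs i).le)
    have hep' : ((Fintype.equivFin υ u : ℕ) : ℝ) * L < T1 + Sp + t p := by
      simpa [hedef, hbdef, ← hT1, ← hSp, ← hDp] using hep
    have heq' : T2 + Sq + t q ≤ ((Fintype.equivFin υ u : ℕ) : ℝ) * L + L := by
      simpa [hedef, hbdef, ← hT2, ← hSq, ← hDq] using heq
    have hjp := hjob p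
    linarith
  · have hAe : A = ∅ := not_nonempty_iff_eq_empty.mp hAne
    have hcls : univ.filter (fun i => ∃ j, cl j = i ∧ f j = u) = ∅ := by
      ext i
      simp only [mem_filter, mem_univ, true_and, notMem_empty, iff_false]
      rintro ⟨j, -, hj⟩
      have : j ∈ A := by simp only [hA, mem_filter, mem_univ, true_and]; exact hj
      simp [hAe] at this
    have : npLoad cl t s f u = 0 := by
      simp only [npLoad, ← hA, hAe, hcls, Finset.sum_empty, add_zero]
    rw [this]
    linarith

/-- Lemma A.2, 2-approximation for the non-preemptive case. -/
theorem np_two_approximation {υ γ ι : Type*} [Fintype υ] [Fintype γ] [Fintype ι]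
    [Nonempty υ] [Nonempty γ]
    (cl : ι → γ) (t : ι → ℝ) (s : γ → ℝ)
    (ht : ∀ j, 0 < t j) (hs : ∀ i, 0 < s i)
    (hcl : ∀ i : γ, ∃ j, cl j = i)
    (Tmin : ℝ)
    (hTmin : Tmin = max (((∑ i, s i) + (∑ j, t j)) / (Fintype.card υ : ℝ))
      (univ.sup' univ_nonempty (fun i : γ => s i +
        (univ.filter (fun j => cl j = i)).sup' (by
          obtain ⟨j, hj⟩ := hcl i
          exact ⟨j, by simp [hj]⟩) t))) :
    (∃ f : ι → υ, npMakespan cl t s f ≤ 2 * Tmin) ∧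
    (∀ g : ι → υ, Tmin ≤ npMakespan cl t s g) := by
  classical
  have hcard : (0 : ℝ) < (Fintype.card υ : ℝ) := by exact_mod_cast Fintype.card_pos
  have hfilne : ∀ i : γ, (univ.filter (fun j => cl j = i)).Nonempty := by
    intro i
    obtain ⟨j, hj⟩ := hcl i
    exact ⟨j, by simp [hj]⟩
  -- Tmin dominates every setup+job of the same class
  have hjobT : ∀ j, s (cl j) + t j ≤ Tmin := by
    intro j
    have h1 : t j ≤ (univ.filter (fun j' => cl j' = cl j)).sup' (hfilne (cl j)) t :=
      Finset.le_sup' t (by simp)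
    have h2 : s (cl j) + (univ.filter (fun j' => cl j' = cl j)).sup' (hfilne (cl j)) t ≤
        univ.sup' univ_nonempty (fun i : γ => s i +
          (univ.filter (fun j' => cl j' = i)).sup' (hfilne i) t) :=
      Finset.le_sup' (fun i : γ => s i +
          (univ.filter (fun j' => cl j' = i)).sup' (hfilne i) t) (mem_univ (cl j))
    rw [hTmin]
    refine le_trans ?_ (le_max_right _ _)
    exact le_trans (by linarith) h2
  have hTpos : 0 < Tmin := by
    obtain ⟨j⟩ : Nonempty ι := ⟨(hcl (Classical.arbitrary γ)).choose⟩
    have := hjobT j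
    have := hs (cl j)
    have := ht j
    linarith
  have hNT : (∑ i, s i) + (∑ j, t j) ≤ (Fintype.card υ : ℝ) * Tmin := by
    have h1 : ((∑ i, s i) + (∑ j, t j)) / (Fintype.card υ : ℝ) ≤ Tmin := by
      rw [hTmin]; exact le_max_left _ _
    have := (div_le_iff₀ hcard).mp h1
    linarith [this]
  constructor
  · exact np_exists_schedule cl t s ht hs Tmin hTpos hNT hjobT
  · intro g
    have hload_le : ∀ u, npLoad cl t s g u ≤ npMakespan cl t s g :=
      fun u => Finset.le_sup' _ (mem_univ u)
    rw [hTmin]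
    apply max_le
    · -- average bound
      have hsum1 : ∑ u, ∑ j ∈ univ.filter (fun j => g j = u), t j = ∑ j, t j :=
        Finset.sum_fiberwise univ g t
      have hsum2 : (∑ i, s i) ≤ ∑ u, ∑ i ∈ univ.filter (fun i => ∃ j, cl j = i ∧ g j = u), s i := by
        have key : ∀ i : γ, s i ≤ ∑ u, (if ∃ j, cl j = i ∧ g j = u then s i else 0) := by
          intro i
          obtain ⟨j, hj⟩ := hcl i
          have hmem : (if ∃ j', cl j' = i ∧ g j' = g j then s i else 0) = s i := by
            rw [if_pos ⟨j, hj, rfl⟩]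
          calc s i = (if ∃ j', cl j' = i ∧ g j' = g j then s i else 0) := hmem.symm
            _ ≤ ∑ u, (if ∃ j', cl j' = i ∧ g j' = u then s i else 0) := by
                apply Finset.single_le_sum
                  (f := fun u => if ∃ j', cl j' = i ∧ g j' = u then s i else 0)
                  (fun u _ => ?_) (mem_univ (g j))
                split <;> simp [(hs i).le]
        calc (∑ i, s i) ≤ ∑ i, ∑ u, (if ∃ j, cl j = i ∧ g j = u then s i else 0) :=
              Finset.sum_le_sum (fun i _ => key i)
          _ = ∑ u, ∑ i, (if ∃ j, cl j = i ∧ g j = u then s i else 0) := Finset.sum_comm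
          _ = ∑ u, ∑ i ∈ univ.filter (fun i => ∃ j, cl j = i ∧ g j = u), s i := by
              refine Finset.sum_congr rfl (fun u _ => ?_)
              rw [Finset.sum_filter]
      have hsumload : (∑ i, s i) + (∑ j, t j) ≤ ∑ u, npLoad cl t s g u := by
        simp only [npLoad, Finset.sum_add_distrib]
        rw [hsum1]
        linarith [hsum2]
      have hfin : ∑ u, npLoad cl t s g u ≤ (Fintype.card υ : ℝ) * npMakespan cl t s g := by
        calc ∑ u, npLoad cl t s g u ≤ ∑ _u : υ, npMakespan cl t s g :=
              Finset.sum_le_sum (fun u _ => hload_le u)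
          _ = (Fintype.card υ : ℝ) * npMakespan cl t s g := by
              rw [Finset.sum_const, Finset.card_univ, nsmul_eq_mul]
      rw [div_le_iff₀ hcard]
      calc (∑ i, s i) + (∑ j, t j) ≤ (Fintype.card υ : ℝ) * npMakespan cl t s g :=
            le_trans hsumload hfin
        _ = npMakespan cl t s g * (Fintype.card υ : ℝ) := mul_comm _ _
    · -- per-class bound
      apply Finset.sup'_le
      intro i _
      obtain ⟨j, hjmem, hjsup⟩ := Finset.exists_mem_eq_sup' (hfilne i) t
      have hji : cl j = i := by simpa using hjmem
      have h1 : t j ≤ ∑ j' ∈ univ.filter (fun j' => g j' = g j), t j' :=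
        Finset.single_le_sum (fun j' _ => (ht j').le) (by simp)
      have hmemi : i ∈ univ.filter (fun i' => ∃ j', cl j' = i' ∧ g j' = g j) := by
        simp only [mem_filter, mem_univ, true_and]
        exact ⟨j, hji, rfl⟩
      have h2 : s i ≤ ∑ i' ∈ univ.filter (fun i' => ∃ j', cl j' = i' ∧ g j' = g j), s i' :=
        Finset.single_le_sum (fun i' _ => (hs i').le) hmemi
      have h3 : s i + t j ≤ npLoad cl t s g (g j) := by
        simp only [npLoad]; linarith
      have h4 := hload_le (g j)
      have h5 : s i + (univ.filter (fun j' => cl j' = i)).sup' (hfilne i) t ≤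
          npMakespan cl t s g := by
        rw [hjsup]; linarith
      exact h5
end

section
/- (Lemma A.1, 2-approximation for the splittable case.) There exists a splittable schedule whose makespan is at most max_i s_i + N/m, and hence at most 2·max{ N/m, max_i s_i }. Since every splittable schedule has makespan at least max{ N/m, max_i s_i }, this constitutes a factor-2 approximation of the optimal splittable makespan. -/
/-!
McNaughton's wrap-around rule. Lay the classes out one after another on `[0, N]`, each as its
setup followed by its jobs, cut `[0, N]` into `m` windows of length `N / m`, and let machine `u`
process the part of the jobs lying in window `u`. A class with work in a window either starts in
the window, and then so does its setup, or it is the single class straddling the window's left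
end; hence every load is at most `N / m` plus one setup time.
-/

open Classical Finset

/-- A splittable schedule: each job `j` is split into nonnegative fractions `x j u` on the
machines `u`, summing to the processing time `t j`. -/
structure SplitSchedule {υ ι : Type*} [Fintype υ] (t : ι → ℝ) where
  x : ι → υ → ℝ
  nonneg : ∀ j u, 0 ≤ x j u
  sum_eq : ∀ j, (∑ u, x j u) = t j

/-- The load of machine `u` in a splittable schedule: total processing time placed on `u`
plus one setup time for each class having positive load on `u`. -/
noncomputable def spLoad {υ γ ι : Type*} [Fintype υ] [Fintype γ] [Fintype ι]
    (cl : ι → γ) (t : ι → ℝ) (s : γ → ℝ) (σ : SplitSchedule (υ := υ) t) (u : υ) : ℝ :=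
  (∑ j, σ.x j u) +
  (∑ i ∈ univ.filter (fun i => ∃ j, cl j = i ∧ 0 < σ.x j u), s i)

/-- The makespan of a splittable schedule: the maximum machine load. -/
noncomputable def spMakespan {υ γ ι : Type*} [Fintype υ] [Fintype γ] [Fintype ι]
    [Nonempty υ] (cl : ι → γ) (t : ι → ℝ) (s : γ → ℝ) (σ : SplitSchedule (υ := υ) t) : ℝ :=
  univ.sup' univ_nonempty (spLoad cl t s σ)

/-- The length of `[a, b] ∩ [p, q]`, for `a ≤ b` and `p ≤ q`. -/
def intervalOverlap (a b p q : ℝ) : ℝ := min (max b p) q - min (max a p) q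

section IntervalOverlap

variable {a b c p q : ℝ}

theorem intervalOverlap_nonneg (hab : a ≤ b) : 0 ≤ intervalOverlap a b p q := by
  unfold intervalOverlap
  linarith [min_le_min_right q (max_le_max_right p hab)]

theorem intervalOverlap_comm (hab : a ≤ b) (hpq : p ≤ q) :
    intervalOverlap a b p q = intervalOverlap p q a b := by
  unfold intervalOverlap
  simp only [min_def, max_def]
  split_ifs <;> linarith

theorem intervalOverlap_add :
    intervalOverlap a b p q + intervalOverlap b c p q = intervalOverlap a c p q := by
  unfold intervalOverlap
  ring

theorem intervalOverlap_le (hpq : p ≤ q) : intervalOverlap a b p q ≤ q - p := by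
  unfold intervalOverlap
  linarith [min_le_right (max b p) q, le_min (le_max_right a p) hpq]

theorem intervalOverlap_of_le_of_le (hpa : p ≤ a) (hab : a ≤ b) (hbq : b ≤ q) :
    intervalOverlap a b p q = b - a := by
  unfold intervalOverlap
  rw [max_eq_left hpa, max_eq_left (hpa.trans hab), min_eq_left hbq, min_eq_left (hab.trans hbq)]

theorem lt_and_lt_of_intervalOverlap_pos (h : 0 < intervalOverlap a b p q) : a < q ∧ p < b := by
  unfold intervalOverlap at h
  constructor <;> by_contra! hc
  · rw [min_eq_right (hc.trans (le_max_left a p))] at h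
    linarith [min_le_right (max b p) q]
  · rw [max_eq_right hc] at h
    linarith [min_le_min_right q (le_max_right a p)]

theorem sum_range_intervalOverlap_windows {L : ℝ} {m : ℕ} (hL : 0 ≤ L) (ha : 0 ≤ a) (hab : a ≤ b)
    (hb : b ≤ m * L) :
    ∑ v ∈ range m, intervalOverlap a b (v * L) ((v + 1) * L) = b - a := by
  set f : ℕ → ℝ := fun w => min (max (w * L) a) b
  have hstep : ∀ v : ℕ, intervalOverlap a b (v * L) ((v + 1) * L) = f (v + 1) - f v := by
    intro v
    rw [intervalOverlap_comm hab (by nlinarith)]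
    simp only [intervalOverlap, f, Nat.cast_succ]
  rw [Finset.sum_congr rfl fun v _ => hstep v, Finset.sum_range_sub]
  simp only [f, Nat.cast_zero, zero_mul, max_eq_right ha, min_eq_left hab,
    max_eq_left (hab.trans hb), min_eq_right hb]

end IntervalOverlap

theorem Finset.sum_sub_prefixSum_telescope {κ : Type*} [LinearOrder κ] (f : ℝ → ℝ) (ℓ : κ → ℝ)
    (z : ℝ) (F : Finset κ) :
    ∑ k ∈ F, (f (z + ∑ k' ∈ F with k' < k, ℓ k' + ℓ k) - f (z + ∑ k' ∈ F with k' < k, ℓ k')) =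
      f (z + ∑ k ∈ F, ℓ k) - f z := by
  induction F using Finset.induction_on_max with
  | empty => simp
  | insert a F ha ih =>
    have haF : a ∉ F := fun h => lt_irrefl a (ha a h)
    have hbelow_a : {k' ∈ insert a F | k' < a} = F := by
      ext x
      simp only [mem_filter, mem_insert]
      constructor
      · rintro ⟨rfl | hx, hlt⟩
        · exact absurd hlt (lt_irrefl _)
        · exact hx
      · exact fun hx => ⟨Or.inr hx, ha x hx⟩
    have hbelow : ∀ k ∈ F, {k' ∈ insert a F | k' < k} = {k' ∈ F | k' < k} := by
      intro k hk
      rw [filter_insert, if_neg (not_lt.2 (ha k hk).le)]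
    have hrest : ∑ k ∈ F, (f (z + ∑ k' ∈ insert a F with k' < k, ℓ k' + ℓ k) -
        f (z + ∑ k' ∈ insert a F with k' < k, ℓ k')) = f (z + ∑ k ∈ F, ℓ k) - f z := by
      rw [← ih]
      exact sum_congr rfl fun k hk => by rw [hbelow k hk]
    rw [sum_insert haF, hbelow_a, hrest, sum_insert haF, add_comm (ℓ a)]
    ring_nf

theorem Finset.sum_filter_lt_add_eq_sum_filter_le {κ M : Type*} [LinearOrder κ] [AddCommMonoid M]
    {F : Finset κ} {k : κ} (hk : k ∈ F) (ℓ : κ → M) :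
    ∑ k' ∈ F with k' < k, ℓ k' + ℓ k = ∑ k' ∈ F with k' ≤ k, ℓ k' := by
  have hF : {k' ∈ F | k' ≤ k} = insert k {k' ∈ F | k' < k} := by
    ext k'
    simp only [mem_filter, mem_insert, le_iff_lt_or_eq]
    constructor
    · rintro ⟨hk', hlt | rfl⟩
      · exact Or.inr ⟨hk', hlt⟩
      · exact Or.inl rfl
    · rintro (rfl | ⟨hk', hlt⟩)
      · exact ⟨hk, Or.inr rfl⟩
      · exact ⟨hk', Or.inl hlt⟩
  rw [hF, sum_insert (by simp), add_comm]

section Layout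

variable {γ ι : Type*} [Fintype γ] [Fintype ι] [LinearOrder γ]
  (cl : ι → γ) (t : ι → ℝ) (s : γ → ℝ)

def classWork (i : γ) : ℝ := ∑ j with cl j = i, t j

def classLength (i : γ) : ℝ := s i + classWork cl t i

/-- The classes are laid out one after another on `[0, N]` in the order of `γ`, each as its setup
followed by its jobs in the order of `ι`. -/
def classStart (i : γ) : ℝ := ∑ k with k < i, classLength cl t s k

variable {cl t s}

theorem sum_classLength : ∑ i, classLength cl t s i = ∑ i, s i + ∑ j, t j := by
  simp only [classLength, classWork, sum_add_distrib, sum_fiberwise]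

variable (ht : ∀ j, 0 ≤ t j) (hs : ∀ i, 0 ≤ s i)
include ht hs

omit [Fintype γ] in
theorem classLength_nonneg (i : γ) : 0 ≤ classLength cl t s i :=
  add_nonneg (hs i) (sum_nonneg fun j _ => ht j)

theorem classStart_add_classLength_le_of_lt {i i' : γ} (h : i < i') :
    classStart cl t s i + classLength cl t s i ≤ classStart cl t s i' := by
  rw [classStart, sum_filter_lt_add_eq_sum_filter_le (mem_univ i)]
  refine sum_le_sum_of_subset_of_nonneg ?_ fun k _ _ => classLength_nonneg ht hs k
  intro k
  simp only [mem_filter, mem_univ, true_and]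
  exact fun hk => hk.trans_lt h

theorem classStart_add_classLength_le_total (i : γ) :
    classStart cl t s i + classLength cl t s i ≤ ∑ i, s i + ∑ j, t j := by
  rw [classStart, sum_filter_lt_add_eq_sum_filter_le (mem_univ i), ← sum_classLength]
  exact sum_le_sum_of_subset_of_nonneg (filter_subset _ _) fun k _ _ => classLength_nonneg ht hs k

theorem classStart_nonneg (i : γ) : 0 ≤ classStart cl t s i :=
  sum_nonneg fun k _ => classLength_nonneg ht hs k

variable [LinearOrder ι]

variable (cl t s) in
def jobStart (j : ι) : ℝ :=
  classStart cl t s (cl j) + s (cl j) + ∑ j' ∈ univ.filter (cl · = cl j) with j' < j, t j'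

omit hs in
theorem le_jobStart (j : ι) : classStart cl t s (cl j) + s (cl j) ≤ jobStart cl t s j :=
  le_add_of_nonneg_right (sum_nonneg fun j' _ => ht j')

omit hs in
theorem jobStart_add_le (j : ι) :
    jobStart cl t s j + t j ≤ classStart cl t s (cl j) + classLength cl t s (cl j) := by
  rw [jobStart, add_assoc,
    sum_filter_lt_add_eq_sum_filter_le (F := univ.filter fun j' => cl j' = cl j) (by simp),
    classLength, classWork, ← add_assoc]
  exact add_le_add_right
    (sum_le_sum_of_subset_of_nonneg (filter_subset (· ≤ j) _) fun j' _ _ => ht j') _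

omit ht hs in
theorem sum_intervalOverlap_jobStart_of_class (p q : ℝ) (i : γ) :
    ∑ j with cl j = i, intervalOverlap (jobStart cl t s j) (jobStart cl t s j + t j) p q =
      intervalOverlap (classStart cl t s i + s i)
        (classStart cl t s i + classLength cl t s i) p q := by
  have h := sum_sub_prefixSum_telescope (fun x => min (max x p) q) t (classStart cl t s i + s i)
    (univ.filter (cl · = i))
  rw [classLength, classWork, ← add_assoc]
  refine Eq.trans (sum_congr rfl fun j hj => ?_) h
  obtain rfl := (mem_filter.1 hj).2
  rfl

omit ht hs [LinearOrder ι] in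
theorem sum_intervalOverlap_classStart (p q : ℝ) :
    ∑ i, intervalOverlap (classStart cl t s i) (classStart cl t s i + classLength cl t s i) p q =
      intervalOverlap 0 (∑ i, s i + ∑ j, t j) p q := by
  have h := sum_sub_prefixSum_telescope (fun x => min (max x p) q) (classLength cl t s) 0 univ
  simp only [zero_add] at h
  rw [← sum_classLength]
  exact h

omit ht hs in
theorem sum_intervalOverlap_setup_add_sum_intervalOverlap_jobStart (p q : ℝ) :
    ∑ i, intervalOverlap (classStart cl t s i) (classStart cl t s i + s i) p q +
      ∑ j, intervalOverlap (jobStart cl t s j) (jobStart cl t s j + t j) p q =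
      intervalOverlap 0 (∑ i, s i + ∑ j, t j) p q := by
  rw [← sum_fiberwise univ cl, sum_congr rfl fun i _ => sum_intervalOverlap_jobStart_of_class p q i,
    ← sum_add_distrib, ← sum_intervalOverlap_classStart]
  exact sum_congr rfl fun i _ => intervalOverlap_add

/-- Every class with work in the window `[p, q]`, except the first one, starts inside the window,
so its setup is paid out of the window's length `q - p`. -/
theorem window_load_le [Nonempty γ] {p q : ℝ} (hpq : p ≤ q) (P : Finset γ)
    (hP : ∀ i ∈ P, ∃ j, cl j = i ∧
      0 < intervalOverlap (jobStart cl t s j) (jobStart cl t s j + t j) p q) :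
    ∑ j, intervalOverlap (jobStart cl t s j) (jobStart cl t s j + t j) p q + ∑ i ∈ P, s i ≤
      univ.sup' univ_nonempty s + (q - p) := by
  set setup : γ → ℝ :=
    fun i => intervalOverlap (classStart cl t s i) (classStart cl t s i + s i) p q
  have hcover := sum_intervalOverlap_setup_add_sum_intervalOverlap_jobStart (cl := cl) (t := t)
    (s := s) p q
  have hwindow := intervalOverlap_le (a := 0) (b := ∑ i, s i + ∑ j, t j) hpq
  have hsetup : 0 ≤ ∑ i, setup i :=
    sum_nonneg fun i _ => intervalOverlap_nonneg (le_add_of_nonneg_right (hs i))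
  have hsup : ∀ i, s i ≤ univ.sup' univ_nonempty s := fun i => le_sup' s (mem_univ i)
  rcases P.eq_empty_or_nonempty with hempty | hne
  · rw [hempty, sum_empty]
    linarith [hs (Classical.arbitrary γ), hsup (Classical.arbitrary γ)]
  have hpos : ∀ i ∈ P, ∃ j, cl j = i ∧ jobStart cl t s j < q ∧ p < jobStart cl t s j + t j :=
    fun i hi => (hP i hi).imp fun j hj => ⟨hj.1, lt_and_lt_of_intervalOverlap_pos hj.2⟩
  set i₀ := P.min' hne
  have hlater : ∀ i ∈ P.erase i₀, s i = setup i := by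
    intro i hi
    obtain ⟨j, rfl, hjq, -⟩ := hpos i (mem_of_mem_erase hi)
    obtain ⟨j₀, hj₀, -, hpj₀⟩ := hpos i₀ (P.min'_mem hne)
    have hfirst := classStart_add_classLength_le_of_lt (cl := cl) ht hs
      (P.min'_lt_of_mem_erase_min' hne hi)
    have hj₀_end := jobStart_add_le (cl := cl) (s := s) ht j₀
    rw [hj₀] at hj₀_end
    have hpi : p ≤ classStart cl t s (cl j) := by linarith
    have hiq : classStart cl t s (cl j) + s (cl j) ≤ q := (le_jobStart ht j).trans hjq.le
    exact ((intervalOverlap_of_le_of_le hpi (le_add_of_nonneg_right (hs _)) hiq).trans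
      (add_sub_cancel_left _ _)).symm
  have hP_sum : ∑ i ∈ P, s i ≤ univ.sup' univ_nonempty s + ∑ i, setup i := by
    rw [← add_sum_erase P s (P.min'_mem hne), sum_congr rfl hlater]
    exact add_le_add (hsup i₀) (sum_le_sum_of_subset_of_nonneg (subset_univ _)
      fun i _ _ => intervalOverlap_nonneg (le_add_of_nonneg_right (hs i)))
  linarith

end Layout

section WrapAround

variable (υ : Type*) {γ ι : Type*} [Fintype υ] [Nonempty υ] [Fintype γ] [Fintype ι]
  [LinearOrder γ] [LinearOrder ι] (cl : ι → γ) {t : ι → ℝ} {s : γ → ℝ}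
  (ht : ∀ j, 0 ≤ t j) (hs : ∀ i, 0 ≤ s i)

noncomputable def wrapAroundSchedule : SplitSchedule (υ := υ) t where
  x j u := intervalOverlap (jobStart cl t s j) (jobStart cl t s j + t j)
    (Fintype.equivFin υ u * ((∑ i, s i + ∑ j, t j) / Fintype.card υ))
    ((Fintype.equivFin υ u + 1) * ((∑ i, s i + ∑ j, t j) / Fintype.card υ))
  nonneg j _ := intervalOverlap_nonneg (le_add_of_nonneg_right (ht j))
  sum_eq j := by
    set N := ∑ i, s i + ∑ j, t j
    set m := Fintype.card υ
    have hm : (0 : ℝ) < m := Nat.cast_pos.2 Fintype.card_pos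
    have hN : 0 ≤ N := add_nonneg (sum_nonneg fun i _ => hs i) (sum_nonneg fun j _ => ht j)
    have hstart : 0 ≤ jobStart cl t s j :=
      (add_nonneg (classStart_nonneg ht hs _) (hs _)).trans (le_jobStart ht j)
    have hend : jobStart cl t s j + t j ≤ m * (N / m) := by
      rw [mul_div_cancel₀ N hm.ne']
      exact (jobStart_add_le ht j).trans (classStart_add_classLength_le_total ht hs _)
    rw [Fintype.sum_equiv (Fintype.equivFin υ) _
        (fun v : Fin m => intervalOverlap (jobStart cl t s j) (jobStart cl t s j + t j)
          (v * (N / m)) ((v + 1) * (N / m))) fun _ => rfl,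
      Fin.sum_univ_eq_sum_range (fun v : ℕ => intervalOverlap (jobStart cl t s j)
          (jobStart cl t s j + t j) (v * (N / m)) ((v + 1) * (N / m))),
      sum_range_intervalOverlap_windows (div_nonneg hN hm.le) hstart
        (le_add_of_nonneg_right (ht j)) hend, add_sub_cancel_left]

theorem spLoad_wrapAroundSchedule_le [Nonempty γ] (u : υ) :
    spLoad cl t s (wrapAroundSchedule υ cl ht hs) u ≤
      univ.sup' univ_nonempty s + (∑ i, s i + ∑ j, t j) / Fintype.card υ := by
  unfold spLoad
  dsimp only [wrapAroundSchedule]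
  set L := (∑ i, s i + ∑ j, t j) / Fintype.card υ
  have hL : 0 ≤ L := div_nonneg
    (add_nonneg (sum_nonneg fun i _ => hs i) (sum_nonneg fun j _ => ht j)) (Nat.cast_nonneg _)
  have hpq : (Fintype.equivFin υ u : ℝ) * L ≤ (Fintype.equivFin υ u + 1) * L := by nlinarith
  refine (window_load_le ht hs hpq _ fun i hi => ?_).trans_eq (by ring)
  -- `spLoad` decides `cl j = i` classically, not through the `LinearOrder γ` in scope.
  let : DecidableEq γ := Classical.decEq γ
  exact (mem_filter.1 hi).2

end WrapAround

theorem sp_two_approximation_general {υ γ ι : Type*} [Fintype υ] [Fintype γ] [Fintype ι]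
    [Nonempty υ] [Nonempty γ]
    (cl : ι → γ) (t : ι → ℝ) (s : γ → ℝ)
    (ht : ∀ j, 0 < t j) (hs : ∀ i, 0 < s i) :
    ∃ σ : SplitSchedule (υ := υ) t,
      spMakespan cl t s σ ≤ (univ.sup' univ_nonempty s) +
        ((∑ i, s i) + (∑ j, t j)) / (Fintype.card υ : ℝ) ∧
      spMakespan cl t s σ ≤ 2 * max (((∑ i, s i) + (∑ j, t j)) / (Fintype.card υ : ℝ))
        (univ.sup' univ_nonempty s) := by
  let : LinearOrder γ := LinearOrder.lift' _ (Fintype.equivFin γ).injective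
  let : LinearOrder ι := LinearOrder.lift' _ (Fintype.equivFin ι).injective
  have hmakespan := sup'_le univ_nonempty _ fun u _ =>
    spLoad_wrapAroundSchedule_le υ cl (fun j => (ht j).le) (fun i => (hs i).le) u
  refine ⟨_, hmakespan, hmakespan.trans ?_⟩
  rw [two_mul]
  exact add_le_add (le_max_right _ _) (le_max_left _ _)

/-- Lemma A.1, 2-approximation for the splittable case: there is a splittable schedule
with makespan at most `max_i s_i + N/m`, hence at most `2·max{N/m, max_i s_i}`. -/
theorem sp_two_approximation {υ γ ι : Type*} [Fintype υ] [Fintype γ] [Fintype ι]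
    [Nonempty υ] [Nonempty γ]
    (cl : ι → γ) (t : ι → ℝ) (s : γ → ℝ)
    (ht : ∀ j, 0 < t j) (hs : ∀ i, 0 < s i)
    (hcl : ∀ i : γ, ∃ j, cl j = i) :
    ∃ σ : SplitSchedule (υ := υ) t,
      spMakespan cl t s σ ≤ (univ.sup' univ_nonempty s) +
        ((∑ i, s i) + (∑ j, t j)) / (Fintype.card υ : ℝ) ∧
      spMakespan cl t s σ ≤ 2 * max (((∑ i, s i) + (∑ j, t j)) / (Fintype.card υ : ℝ))
        (univ.sup' univ_nonempty s) :=
  sp_two_approximation_general cl t s ht hs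
end

section
/- (Theorem 3.5 (i), splittable rejection test.) Let T > 0, let I_exp = { i : s_i > T/2 } and I_chp = { i : s_i ≤ T/2 }, let β_i = ⌈2·P(C_i)/T⌉, L_split = P(J) + Σ_{i∈I_chp} s_i + Σ_{i∈I_exp} β_i·s_i, and m_exp = Σ_{i∈I_exp} β_i. If there exists a splittable schedule with makespan at most T, then m·T ≥ L_split and m ≥ m_exp. Equivalently, if m·T < L_split or m < m_exp, then T is strictly smaller than the optimal splittable makespan. -/
open Classical Finset

/-- Theorem 3.5 (i), splittable rejection test: if a splittable schedule with makespan at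
most `T` exists, then `m·T ≥ L_split = P(J) + Σ_{i∈I_chp} s_i + Σ_{i∈I_exp} β_i s_i` and
`m ≥ m_exp = Σ_{i∈I_exp} β_i`, where `β_i = ⌈2P(C_i)/T⌉`, `I_exp = {i : s_i > T/2}` and
`I_chp = {i : s_i ≤ T/2}`. -/
theorem sp_rejection_test {υ γ ι : Type*} [Fintype υ] [Fintype γ] [Fintype ι]
    [Nonempty υ]
    (cl : ι → γ) (t : ι → ℝ) (s : γ → ℝ)
    (ht : ∀ j, 0 < t j) (hs : ∀ i, 0 < s i)
    (hcl : ∀ i : γ, ∃ j, cl j = i)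
    (T : ℝ) (hT : 0 < T)
    (hfeas : ∃ σ : SplitSchedule (υ := υ) t, spMakespan cl t s σ ≤ T) :
    ((∑ j, t j) + (∑ i ∈ univ.filter (fun i : γ => s i ≤ T / 2), s i) +
      (∑ i ∈ univ.filter (fun i : γ => T / 2 < s i),
        (⌈2 * (∑ j ∈ univ.filter (fun j => cl j = i), t j) / T⌉ : ℝ) * s i))
      ≤ (Fintype.card υ : ℝ) * T ∧
    (∑ i ∈ univ.filter (fun i : γ => T / 2 < s i),
        ⌈2 * (∑ j ∈ univ.filter (fun j => cl j = i), t j) / T⌉)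
      ≤ (Fintype.card υ : ℤ) := by
  obtain ⟨σ, hσ⟩ := hfeas
  have hload : ∀ u, spLoad cl t s σ u ≤ T := fun u =>
    le_trans (Finset.le_sup' _ (mem_univ u)) hσ
  set M : γ → Finset υ := fun i => univ.filter (fun u => ∃ j, cl j = i ∧ 0 < σ.x j u) with hM
  set p : γ → υ → ℝ := fun i u => ∑ j ∈ univ.filter (fun j => cl j = i), σ.x j u with hp
  set P : γ → ℝ := fun i => ∑ j ∈ univ.filter (fun j => cl j = i), t j with hPdef
  have hPpos : ∀ i, 0 < P i := by
    intro i
    obtain ⟨j, hj⟩ := hcl i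
    exact Finset.sum_pos (fun j _ => ht j) ⟨j, mem_filter.mpr ⟨mem_univ j, hj⟩⟩
  have hPsum : ∀ i, ∑ u ∈ M i, p i u = P i := by
    intro i
    have h1 : ∑ u, p i u = P i := by
      rw [hp, hPdef]
      rw [Finset.sum_comm]
      exact Finset.sum_congr rfl fun j _ => σ.sum_eq j
    rw [← h1]
    apply Finset.sum_subset (Finset.subset_univ _)
    intro u _ hu
    simp only [hM, mem_filter, mem_univ, true_and, not_exists] at hu
    apply Finset.sum_eq_zero
    intro j hj
    by_contra hne
    exact hu j ⟨(mem_filter.mp hj).2, lt_of_le_of_ne (σ.nonneg j u) (Ne.symm hne)⟩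
  have hMne : ∀ i, (M i).Nonempty := by
    intro i
    by_contra h
    rw [Finset.not_nonempty_iff_eq_empty] at h
    have h2 := hPsum i
    rw [h, Finset.sum_empty] at h2
    exact (hPpos i).ne' h2.symm
  have hkey : ∀ i, ∀ u ∈ M i, p i u + s i ≤ T := by
    intro i u hu
    have h1 : p i u ≤ ∑ j, σ.x j u :=
      Finset.sum_le_sum_of_subset_of_nonneg (Finset.subset_univ _)
        (fun j _ _ => σ.nonneg j u)
    have hcond : ∃ j, cl j = i ∧ 0 < σ.x j u := by
      have := hu
      simp only [hM, mem_filter, mem_univ, true_and] at this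
      exact this
    have h2 : s i ≤ ∑ i' ∈ univ.filter (fun i' => ∃ j, cl j = i' ∧ 0 < σ.x j u), s i' :=
      Finset.single_le_sum (fun i' _ => (hs i').le)
        (Finset.mem_filter.mpr ⟨Finset.mem_univ i, hcond⟩)
    have h3 := hload u
    unfold spLoad at h3
    linarith
  have hexp : ∀ i, T / 2 < s i → (⌈2 * P i / T⌉ : ℤ) ≤ ((M i).card : ℤ) := by
    intro i hi
    have hncard : (1 : ℝ) ≤ ((M i).card : ℝ) := by
      exact_mod_cast Finset.card_pos.mpr (hMne i)
    have h1 : P i ≤ ((M i).card : ℝ) * (T - s i) := by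
      rw [← hPsum i]
      calc ∑ u ∈ M i, p i u ≤ ∑ _u ∈ M i, (T - s i) :=
            Finset.sum_le_sum (fun u hu => by linarith [hkey i u hu])
        _ = ((M i).card : ℝ) * (T - s i) := by rw [Finset.sum_const, nsmul_eq_mul]
    have h2 : ((M i).card : ℝ) * (T - s i) ≤ ((M i).card : ℝ) * (T / 2) := by
      apply mul_le_mul_of_nonneg_left (by linarith) (by linarith)
    rw [Int.ceil_le]
    push_cast
    rw [div_le_iff₀ hT]
    nlinarith
  have hdisj : ∀ i ∈ univ.filter (fun i : γ => T / 2 < s i),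
      ∀ i' ∈ univ.filter (fun i : γ => T / 2 < s i), i ≠ i' → Disjoint (M i) (M i') := by
    intro i hi i' hi' hne
    rw [Finset.disjoint_left]
    intro u hu hu'
    have hc : ∃ j, cl j = i ∧ 0 < σ.x j u := by
      have := hu; simp only [hM, mem_filter, mem_univ, true_and] at this; exact this
    have hc' : ∃ j, cl j = i' ∧ 0 < σ.x j u := by
      have := hu'; simp only [hM, mem_filter, mem_univ, true_and] at this; exact this
    have hsub : ({i, i'} : Finset γ) ⊆
        univ.filter (fun i'' => ∃ j, cl j = i'' ∧ 0 < σ.x j u) := by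
      intro z hz
      simp only [Finset.mem_insert, Finset.mem_singleton] at hz
      rcases hz with rfl | rfl
      · exact mem_filter.mpr ⟨mem_univ _, hc⟩
      · exact mem_filter.mpr ⟨mem_univ _, hc'⟩
    have h2 : s i + s i' ≤ ∑ z ∈ univ.filter (fun i'' => ∃ j, cl j = i'' ∧ 0 < σ.x j u), s z := by
      have h := Finset.sum_le_sum_of_subset_of_nonneg hsub (fun z _ _ => (hs z).le)
      rwa [Finset.sum_pair hne] at h
    have h3 := hload u
    unfold spLoad at h3
    have hx : 0 ≤ ∑ j, σ.x j u := Finset.sum_nonneg fun j _ => σ.nonneg j u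
    have hi2 : T / 2 < s i := (mem_filter.mp hi).2
    have hi'2 : T / 2 < s i' := (mem_filter.mp hi').2
    linarith
  have hcard : ∑ i ∈ univ.filter (fun i : γ => T / 2 < s i), (M i).card ≤ Fintype.card υ := by
    rw [← Finset.card_biUnion hdisj]
    exact le_trans (Finset.card_le_univ _) (le_of_eq Finset.card_univ)
  have hsecond : (∑ i ∈ univ.filter (fun i : γ => T / 2 < s i), ⌈2 * P i / T⌉)
      ≤ (Fintype.card υ : ℤ) := by
    calc (∑ i ∈ univ.filter (fun i : γ => T / 2 < s i), ⌈2 * P i / T⌉)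
        ≤ ∑ i ∈ univ.filter (fun i : γ => T / 2 < s i), ((M i).card : ℤ) :=
          Finset.sum_le_sum (fun i hi => hexp i (mem_filter.mp hi).2)
      _ = ((∑ i ∈ univ.filter (fun i : γ => T / 2 < s i), (M i).card : ℕ) : ℤ) := by
          push_cast; ring
      _ ≤ (Fintype.card υ : ℤ) := by exact_mod_cast hcard
  refine ⟨?_, hsecond⟩
  have hsumload : ∑ u, spLoad cl t s σ u ≤ (Fintype.card υ : ℝ) * T := by
    calc ∑ u, spLoad cl t s σ u ≤ ∑ _u : υ, T := Finset.sum_le_sum fun u _ => hload u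
      _ = (Fintype.card υ : ℝ) * T := by
          rw [Finset.sum_const, nsmul_eq_mul, Finset.card_univ]
  have hsplit : ∑ u, spLoad cl t s σ u = (∑ j, t j) + ∑ i, ((M i).card : ℝ) * s i := by
    unfold spLoad
    rw [Finset.sum_add_distrib]
    congr 1
    · rw [Finset.sum_comm]
      exact Finset.sum_congr rfl fun j _ => σ.sum_eq j
    · have hstep : ∀ u : υ, (∑ i ∈ univ.filter (fun i => ∃ j, cl j = i ∧ 0 < σ.x j u), s i)
          = ∑ i : γ, if ∃ j, cl j = i ∧ 0 < σ.x j u then s i else 0 :=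
        fun u => Finset.sum_filter _ _
      simp_rw [hstep]
      rw [Finset.sum_comm]
      apply Finset.sum_congr rfl
      intro i _
      rw [← Finset.sum_filter, Finset.sum_const, nsmul_eq_mul]
  have hlow : (∑ i ∈ univ.filter (fun i : γ => s i ≤ T / 2), s i) +
      (∑ i ∈ univ.filter (fun i : γ => T / 2 < s i), (⌈2 * P i / T⌉ : ℝ) * s i)
      ≤ ∑ i, ((M i).card : ℝ) * s i := by
    rw [← Finset.sum_filter_add_sum_filter_not univ (fun i : γ => s i ≤ T / 2)
      (fun i => ((M i).card : ℝ) * s i)]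
    have heq : univ.filter (fun i : γ => ¬ s i ≤ T / 2) = univ.filter (fun i : γ => T / 2 < s i) := by
      apply Finset.filter_congr
      intro i _
      simp [not_le]
    rw [heq]
    apply add_le_add
    · apply Finset.sum_le_sum
      intro i _
      have h1 : (1 : ℝ) ≤ ((M i).card : ℝ) := by
        exact_mod_cast Finset.card_pos.mpr (hMne i)
      exact le_mul_of_one_le_left (hs i).le h1
    · apply Finset.sum_le_sum
      intro i hi
      have h1 : (⌈2 * P i / T⌉ : ℝ) ≤ ((M i).card : ℝ) := by
        exact_mod_cast hexp i (mem_filter.mp hi).2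
      exact mul_le_mul_of_nonneg_right h1 (hs i).le
  rw [hsplit] at hsumload
  linarith
end

section
/- (Theorem 3.5 (ii), splittable 3/2-dual approximation.) Let T > 0 with s_i ≤ T for every class i, let I_exp = { i : s_i > T/2 } and I_chp = { i : s_i ≤ T/2 }, let β_i = ⌈2·P(C_i)/T⌉, L_split = P(J) + Σ_{i∈I_chp} s_i + Σ_{i∈I_exp} β_i·s_i, and m_exp = Σ_{i∈I_exp} β_i. If m·T ≥ L_split and m ≥ m_exp, then there exists a splittable schedule whose makespan is at most (3/2)·T. -/
open Classical Finset

/-!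
Expensive classes (`T / 2 < s i`) get `β i = ⌈2 P(C_i) / T⌉` machines of their own, over which
their processing time is spread evenly, so such a machine carries at most `s i + T / 2 ≤ 3T/2`.
The cheap classes are laid end to end on a line, each block being the setup followed by the
processing of the class, and the line is cut, as in McNaughton's wrap-around rule, along the
capacities `max 0 (T - D u)` that the expensive load `D u` leaves free; `m T ≥ L_split` says that
the line fits. A machine then receives at most its free capacity plus the setup of the one cheap
class whose block straddles its left end, and that setup is at most `T / 2`. A class-level
allocation becomes a job-level schedule by splitting every job of a class in proportion to its
processing time.
-/

section Overlap

def clip (A B r : ℝ) : ℝ := max A (min B r)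

/-- For `a ≤ b` and `A ≤ B`, the length of `[a, b] ∩ [A, B]`. -/
def overlap (a b A B : ℝ) : ℝ := clip A B b - clip A B a

variable {a b A B r : ℝ}

theorem clip_mono (A B : ℝ) : Monotone (clip A B) :=
  fun _ _ h => max_le_max le_rfl (min_le_min le_rfl h)

theorem le_clip (A B r : ℝ) : A ≤ clip A B r := le_max_left _ _

theorem clip_le (hAB : A ≤ B) (r : ℝ) : clip A B r ≤ B := max_le hAB (min_le_left _ _)

theorem clip_of_le (hAB : A ≤ B) (hr : r ≤ A) : clip A B r = A := by
  simp only [clip, max_def, min_def]; split_ifs <;> linarith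

theorem clip_of_ge (hAB : A ≤ B) (hr : B ≤ r) : clip A B r = B := by
  simp only [clip, max_def, min_def]; split_ifs <;> linarith

theorem overlap_nonneg (hab : a ≤ b) : 0 ≤ overlap a b A B := sub_nonneg.2 (clip_mono A B hab)

theorem overlap_le (hAB : A ≤ B) : overlap a b A B ≤ B - A :=
  sub_le_sub (clip_le hAB b) (le_clip A B a)

theorem overlap_add (a b c A B : ℝ) : overlap a b A B + overlap b c A B = overlap a c A B := by
  simp only [overlap]; ring

theorem overlap_comm (hab : a ≤ b) (hAB : A ≤ B) : overlap a b A B = overlap A B a b := by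
  simp only [overlap, clip, max_def, min_def]; split_ifs <;> linarith

theorem overlap_of_le_of_le (hAa : A ≤ a) (hab : a ≤ b) (hbB : b ≤ B) :
    overlap a b A B = b - a := by
  simp only [overlap, clip, max_def, min_def]; split_ifs <;> linarith

theorem lt_and_lt_of_overlap_pos (hAB : A ≤ B) (h : 0 < overlap a b A B) : A < b ∧ a < B := by
  unfold overlap at h
  constructor
  · by_contra! hb
    linarith [clip_of_le hAB hb, le_clip A B a]
  · by_contra! ha
    linarith [clip_of_ge hAB ha, clip_le hAB b]

end Overlap

section PrefixSum

variable {α M : Type*} [LinearOrder α] [AddCommMonoid M]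

def prefixSum (S : Finset α) (ℓ : α → M) (a : α) : M := ∑ b ∈ S with b < a, ℓ b

theorem sum_sub_prefixSum {N : Type*} [AddCommGroup N] (S : Finset α) (ℓ : α → M) (G : M → N) :
    ∑ a ∈ S, (G (prefixSum S ℓ a + ℓ a) - G (prefixSum S ℓ a)) = G (∑ a ∈ S, ℓ a) - G 0 := by
  induction S using Finset.induction_on_max with
  | empty => simp
  | insert a S ha ih =>
    have haS : a ∉ S := fun h => lt_irrefl a (ha a h)
    have h_top : prefixSum (insert a S) ℓ a = ∑ b ∈ S, ℓ b := by
      rw [prefixSum, filter_insert, if_neg (lt_irrefl a), filter_true_of_mem ha]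
    have h_below : ∀ b ∈ S, prefixSum (insert a S) ℓ b = prefixSum S ℓ b := fun b hb => by
      rw [prefixSum, filter_insert, if_neg (ha b hb).not_gt, prefixSum]
    rw [sum_insert haS, sum_congr rfl fun b hb => by rw [h_below b hb], ih, h_top, sum_insert haS,
      add_comm (ℓ a)]
    abel

theorem prefixSum_add_eq {S : Finset α} {a : α} (ℓ : α → M) (ha : a ∈ S) :
    prefixSum S ℓ a + ℓ a = ∑ b ∈ S with b ≤ a, ℓ b := by
  have : {b ∈ S | b ≤ a} = insert a {b ∈ S | b < a} := by
    ext b; simp only [mem_filter, mem_insert, le_iff_lt_or_eq]; grind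
  rw [this, sum_insert (by simp), prefixSum, add_comm]

variable [PartialOrder M] [IsOrderedAddMonoid M] {S : Finset α} {ℓ : α → M}

theorem prefixSum_nonneg (hℓ : ∀ b ∈ S, 0 ≤ ℓ b) (a : α) : 0 ≤ prefixSum S ℓ a :=
  sum_nonneg fun b hb => hℓ b (mem_filter.1 hb).1

theorem prefixSum_add_le_prefixSum (hℓ : ∀ b ∈ S, 0 ≤ ℓ b) {a b : α} (ha : a ∈ S) (hab : a < b) :
    prefixSum S ℓ a + ℓ a ≤ prefixSum S ℓ b := by
  rw [prefixSum_add_eq ℓ ha]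
  refine sum_le_sum_of_subset_of_nonneg (fun x hx => ?_) fun x hx _ => hℓ x (mem_filter.1 hx).1
  simp only [mem_filter] at hx ⊢
  exact ⟨hx.1, hx.2.trans_lt hab⟩

theorem prefixSum_add_le_sum (hℓ : ∀ b ∈ S, 0 ≤ ℓ b) {a : α} (ha : a ∈ S) :
    prefixSum S ℓ a + ℓ a ≤ ∑ b ∈ S, ℓ b := by
  rw [prefixSum_add_eq ℓ ha]
  exact sum_le_sum_of_subset_of_nonneg (filter_subset _ _) fun x hx _ => hℓ x hx

theorem card_filter_prefixSum_lt_lt_le_one (hℓ : ∀ b ∈ S, 0 ≤ ℓ b) (x : M) :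
    #{a ∈ S | prefixSum S ℓ a < x ∧ x < prefixSum S ℓ a + ℓ a} ≤ 1 := by
  refine card_le_one.2 fun a ha b hb => ?_
  simp only [mem_filter] at ha hb
  by_contra hne
  rcases lt_or_gt_of_ne hne with h | h
  · exact lt_irrefl x ((ha.2.2.trans_le (prefixSum_add_le_prefixSum hℓ ha.1 h)).trans hb.2.1)
  · exact lt_irrefl x ((hb.2.2.trans_le (prefixSum_add_le_prefixSum hℓ hb.1 h)).trans ha.2.1)

end PrefixSum

theorem Finset.sum_le_of_card_le_one {ι N : Type*} [AddCommMonoid N] [PartialOrder N]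
    [IsOrderedAddMonoid N] {S : Finset ι} {f : ι → N} {c : N} (hS : #S ≤ 1)
    (hf : ∀ i ∈ S, f i ≤ c) (hc : 0 ≤ c) : ∑ i ∈ S, f i ≤ c :=
  calc ∑ i ∈ S, f i ≤ #S • c := sum_le_card_nsmul S f c hf
    _ ≤ 1 • c := nsmul_le_nsmul_left hc hS
    _ = c := one_nsmul c

theorem Finset.exists_pairwiseDisjoint_card_eq {α β : Type*} [Fintype β] (S : Finset α) (n : α → ℕ)
    (h : ∑ i ∈ S, n i ≤ Fintype.card β) :
    ∃ W : α → Finset β, (∀ i ∈ S, #(W i) = n i) ∧ (S : Set α).PairwiseDisjoint W := by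
  induction S using Finset.induction_on with
  | empty => exact ⟨fun _ => ∅, by simp, by simp⟩
  | insert a S ha ih =>
    rw [sum_insert ha] at h
    obtain ⟨W, hW, hdisj⟩ := ih (by omega)
    have hfree : n a ≤ #(S.biUnion W)ᶜ := by
      have hcard : ∑ i ∈ S, #(W i) = ∑ i ∈ S, n i := sum_congr rfl hW
      rw [card_compl, card_biUnion hdisj, hcard]; omega
    obtain ⟨V, hV, hVcard⟩ := exists_subset_card_eq hfree
    have hupd : ∀ i ∈ S, Function.update W a V i = W i :=
      fun i hi => Function.update_of_ne (ne_of_mem_of_not_mem hi ha) _ _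
    refine ⟨Function.update W a V, fun i hi => ?_, ?_⟩
    · rcases mem_insert.1 hi with rfl | hi
      · simpa using hVcard
      · rw [hupd i hi, hW i hi]
    · rw [coe_insert, Set.pairwiseDisjoint_insert]
      refine ⟨hdisj.mono_on fun i hi => (hupd i hi).le, fun i hi _ => ?_⟩
      rw [Function.update_self, hupd i hi]
      exact disjoint_of_subset_left hV (disjoint_compl_left.mono_right (subset_biUnion_of_mem W hi))

noncomputable def loadWithSetup (s x : ℝ) : ℝ := x + if 0 < x then s else 0

theorem loadWithSetup_zero (s : ℝ) : loadWithSetup s 0 = 0 := by simp [loadWithSetup]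

theorem loadWithSetup_le {s x : ℝ} (hs : 0 ≤ s) : loadWithSetup s x ≤ x + s := by
  unfold loadWithSetup; split_ifs <;> linarith

section ClassLevel

variable {υ γ ι : Type*} [Fintype υ] [Fintype γ] [Fintype ι]

noncomputable def classTime (cl : ι → γ) (t : ι → ℝ) (i : γ) : ℝ :=
  ∑ j ∈ univ.filter (fun j => cl j = i), t j

theorem sum_classTime (cl : ι → γ) (t : ι → ℝ) : ∑ i, classTime cl t i = ∑ j, t j :=
  sum_fiberwise univ cl t

theorem exists_splitSchedule_spLoad_eq (cl : ι → γ) (t : ι → ℝ) (s : γ → ℝ) (ht : ∀ j, 0 < t j)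
    (q : γ → υ → ℝ) (hq0 : ∀ i u, 0 ≤ q i u) (hq : ∀ i, ∑ u, q i u = classTime cl t i) :
    ∃ σ : SplitSchedule (υ := υ) t, ∀ u, spLoad cl t s σ u = ∑ i, loadWithSetup (s i) (q i u) := by
  have hzero : ∀ i u, classTime cl t i = 0 → q i u = 0 := fun i u h =>
    (sum_eq_zero_iff_of_nonneg fun u _ => hq0 i u).1 ((hq i).trans h) u (mem_univ u)
  have hpos : ∀ j, 0 < classTime cl t (cl j) := fun j =>
    (ht j).trans_le (single_le_sum (fun k _ => (ht k).le) (by simp))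
  let x j u := t j * q (cl j) u / classTime cl t (cl j)
  have hclass : ∀ i u, ∑ j ∈ univ.filter (fun j => cl j = i), x j u = q i u := by
    intro i u
    have hxj : ∀ j ∈ univ.filter (fun j => cl j = i), x j u = t j * (q i u / classTime cl t i) :=
      fun j hj => by simp only [x, (mem_filter.1 hj).2]; ring
    rw [sum_congr rfl hxj, ← sum_mul]
    by_cases hP : classTime cl t i = 0
    · simp [hzero i u hP]
    · exact mul_div_cancel₀ _ hP
  have hactive : ∀ i u, (∃ j, cl j = i ∧ 0 < x j u) ↔ 0 < q i u := by
    intro i u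
    constructor
    · rintro ⟨j, rfl, hx⟩
      refine (hq0 _ u).lt_of_ne fun h => ?_
      simp [x, ← h] at hx
    · intro hqpos
      have hP : classTime cl t i ≠ 0 := fun h => hqpos.ne' (hzero i u h)
      obtain ⟨j, hj⟩ := nonempty_of_sum_ne_zero hP
      obtain rfl := (mem_filter.1 hj).2
      exact ⟨j, rfl, div_pos (mul_pos (ht j) hqpos) (hpos j)⟩
  refine ⟨⟨x, fun j u => div_nonneg (mul_nonneg (ht j).le (hq0 _ u)) (hpos j).le, fun j => ?_⟩,
    fun u => ?_⟩
  · rw [← sum_div, ← mul_sum, hq, mul_div_cancel_right₀ _ (hpos j).ne']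
  · rw [spLoad, ← sum_fiberwise univ cl, sum_filter, ← sum_add_distrib]
    refine sum_congr rfl fun i _ => ?_
    simp only [hclass, hactive, loadWithSetup]

end ClassLevel

section Cheap

variable {γ υ : Type*}

theorem sum_overlap_prefixSum [LinearOrder υ] (S : Finset υ) {c : υ → ℝ} (hc : ∀ u ∈ S, 0 ≤ c u)
    {x y : ℝ} (hx : 0 ≤ x) (hxy : x ≤ y) (hy : y ≤ ∑ u ∈ S, c u) :
    ∑ u ∈ S, overlap x y (prefixSum S c u) (prefixSum S c u + c u) = y - x := by
  rw [sum_congr rfl fun u hu => overlap_comm hxy (le_add_of_nonneg_right (hc u hu))]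
  change ∑ u ∈ S, (clip x y (prefixSum S c u + c u) - clip x y (prefixSum S c u)) = y - x
  rw [sum_sub_prefixSum, ← overlap, overlap_comm (sum_nonneg hc) hxy,
    overlap_of_le_of_le hx hxy hy]

/-- Only the class whose block straddles `A` can have its setup outside `[A, A + c]`. -/
theorem sum_loadWithSetup_overlap_le [LinearOrder γ] (K : Finset γ) {s P : γ → ℝ} {σ : ℝ}
    (hs : ∀ i, 0 ≤ s i) (hsσ : ∀ i ∈ K, s i ≤ σ) (hσ : 0 ≤ σ) (hP : ∀ i, 0 ≤ P i)
    (A : ℝ) {c : ℝ} (hc : 0 ≤ c) :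
    ∑ i ∈ K, loadWithSetup (s i)
      (overlap (prefixSum K (s + P) i + s i) (prefixSum K (s + P) i + s i + P i) A (A + c))
      ≤ c + σ := by
  set a := prefixSum K (s + P)
  have hℓ : ∀ i ∈ K, 0 ≤ (s + P) i := fun i _ => add_nonneg (hs i) (hP i)
  have hAc : A ≤ A + c := le_add_of_nonneg_right hc
  have hterm : ∀ i ∈ K,
      loadWithSetup (s i) (overlap (a i + s i) (a i + s i + P i) A (A + c))
        ≤ overlap (a i) (a i + (s + P) i) A (A + c)
          + if a i < A ∧ A < a i + (s + P) i then s i else 0 := by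
    intro i _
    set o := overlap (a i + s i) (a i + s i + P i) A (A + c)
    have hsplit :
        overlap (a i) (a i + s i) A (A + c) + o = overlap (a i) (a i + (s + P) i) A (A + c) := by
      rw [overlap_add, Pi.add_apply, add_assoc]
    have hsetup : 0 ≤ overlap (a i) (a i + s i) A (A + c) :=
      overlap_nonneg (le_add_of_nonneg_right (hs i))
    unfold loadWithSetup
    split_ifs with ho hstraddle
    · linarith
    · obtain ⟨hA, hAc'⟩ := lt_and_lt_of_overlap_pos hAc ho
      have haA : A ≤ a i := by
        by_contra! h
        exact hstraddle ⟨h, by simp only [Pi.add_apply]; linarith⟩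
      rw [overlap_of_le_of_le haA (le_add_of_nonneg_right (hs i)) hAc'.le] at hsplit
      linarith
    · linarith [hs i]
    · linarith
  calc _ ≤ ∑ i ∈ K, (overlap (a i) (a i + (s + P) i) A (A + c)
          + if a i < A ∧ A < a i + (s + P) i then s i else 0) := sum_le_sum hterm
    _ = overlap 0 (∑ i ∈ K, (s + P) i) A (A + c)
          + ∑ i ∈ K with a i < A ∧ A < a i + (s + P) i, s i := by
        rw [sum_add_distrib, ← sum_filter]
        exact congrArg (· + _) (sum_sub_prefixSum K (s + P) (clip A (A + c)))
    _ ≤ c + σ := by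
        refine add_le_add ((overlap_le hAc).trans_eq (by ring)) ?_
        exact sum_le_of_card_le_one (card_filter_prefixSum_lt_lt_le_one hℓ A)
          (fun i hi => hsσ i (mem_filter.1 hi).1) hσ

/-- McNaughton's wrap-around rule: the blocks of the classes, laid end to end, are cut along the
capacities `c u` of the machines. -/
theorem exists_wrapAround_alloc [Fintype υ] (K : Finset γ) {s P : γ → ℝ} {σ : ℝ}
    (hs : ∀ i, 0 ≤ s i) (hsσ : ∀ i ∈ K, s i ≤ σ) (hσ : 0 ≤ σ) (hP : ∀ i, 0 ≤ P i)
    {c : υ → ℝ} (hc : ∀ u, 0 ≤ c u) (hfit : ∑ i ∈ K, (s i + P i) ≤ ∑ u, c u) :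
    ∃ q : γ → υ → ℝ, (∀ i u, 0 ≤ q i u) ∧ (∀ i ∈ K, ∑ u, q i u = P i) ∧
      (∀ u, c u = 0 → ∀ i, q i u = 0) ∧
      ∀ u, ∑ i ∈ K, loadWithSetup (s i) (q i u) ≤ c u + σ := by
  let : LinearOrder γ := IsWellOrder.linearOrder WellOrderingRel
  let : LinearOrder υ := IsWellOrder.linearOrder WellOrderingRel
  set a := prefixSum K (s + P)
  set F := prefixSum univ c
  have hℓ : ∀ i ∈ K, 0 ≤ (s + P) i := fun i _ => add_nonneg (hs i) (hP i)
  refine ⟨fun i u => overlap (a i + s i) (a i + s i + P i) (F u) (F u + c u),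
    fun i u => overlap_nonneg (le_add_of_nonneg_right (hP i)), fun i hi => ?_,
    fun u hu i => ?_, fun u => sum_loadWithSetup_overlap_le K hs hsσ hσ hP (F u) (hc u)⟩
  · have hend : a i + s i + P i ≤ ∑ u, c u :=
      calc a i + s i + P i = a i + (s + P) i := by simp only [Pi.add_apply]; ring
        _ ≤ ∑ i ∈ K, (s + P) i := prefixSum_add_le_sum hℓ hi
        _ ≤ ∑ u, c u := hfit
    rw [sum_overlap_prefixSum univ (fun u _ => hc u)
      (add_nonneg (prefixSum_nonneg hℓ i) (hs i)) (le_add_of_nonneg_right (hP i)) hend]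
    ring
  · refine le_antisymm ?_ (overlap_nonneg (le_add_of_nonneg_right (hP i)))
    exact (overlap_le (le_add_of_nonneg_right (hc u))).trans_eq (by rw [hu]; ring)

end Cheap

section Expensive

variable {γ υ : Type*} [Fintype υ]

theorem exists_dedicated_alloc (E : Finset γ) {s P : γ → ℝ} {T : ℝ} (hT : 0 < T)
    (hs : ∀ i, 0 ≤ s i) (hsT : ∀ i ∈ E, s i ≤ T) (hP : ∀ i, 0 ≤ P i) {β : γ → ℕ}
    (hβ : ∀ i ∈ E, 2 * P i ≤ β i * T) (hm : ∑ i ∈ E, β i ≤ Fintype.card υ) :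
    ∃ q : γ → υ → ℝ, (∀ i u, 0 ≤ q i u) ∧ (∀ i ∈ E, ∑ u, q i u = P i) ∧
      (∀ u, ∑ i ∈ E, loadWithSetup (s i) (q i u) ≤ 3 / 2 * T) ∧
      ∑ u, ∑ i ∈ E, loadWithSetup (s i) (q i u) ≤ ∑ i ∈ E, (β i * s i + P i) := by
  obtain ⟨W, hW, hdisj⟩ := exists_pairwiseDisjoint_card_eq E β hm
  have hβP : ∀ i ∈ E, (β i : ℝ) * (P i / β i) = P i := by
    intro i hi
    rcases eq_or_ne (β i : ℝ) 0 with h | h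
    · have := hβ i hi
      rw [h, zero_mul] at this
      rw [h, zero_mul]
      linarith [hP i]
    · exact mul_div_cancel₀ _ h
  have hshare : ∀ i ∈ E, P i / β i ≤ T / 2 := by
    intro i hi
    rcases eq_or_ne (β i : ℝ) 0 with h | h
    · rw [h, div_zero]; positivity
    · rw [div_le_iff₀ (lt_of_le_of_ne (Nat.cast_nonneg _) h.symm)]
      linarith [hβ i hi]
  set q : γ → υ → ℝ := fun i u => if u ∈ W i then P i / β i else 0
  have hsum : ∀ i ∈ E, ∀ f : γ → ℝ, ∑ u, (if u ∈ W i then f i else 0) = β i * f i := by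
    intro i hi f
    rw [sum_ite_mem, univ_inter, sum_const, hW i hi, nsmul_eq_mul]
  have hterm : ∀ u, ∀ i ∈ E,
      loadWithSetup (s i) (q i u) ≤ if u ∈ W i then s i + P i / β i else 0 := by
    intro u i _
    by_cases hu : u ∈ W i
    · simpa only [q, if_pos hu, add_comm (s i)] using loadWithSetup_le (hs i)
    · simp only [q, if_neg hu, loadWithSetup_zero, le_refl]
  refine ⟨q, fun i u => ?_, fun i hi => ?_, fun u => ?_, ?_⟩
  · by_cases hu : u ∈ W i
    · simp only [q, if_pos hu]; exact div_nonneg (hP i) (Nat.cast_nonneg _)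
    · simp only [q, if_neg hu, le_refl]
  · exact (hsum i hi fun i => P i / β i).trans (hβP i hi)
  · have hunique : #{i ∈ E | u ∈ W i} ≤ 1 := by
      refine card_le_one.2 fun i hi j hj => ?_
      simp only [mem_filter] at hi hj
      by_contra hne
      exact disjoint_left.1 (hdisj hi.1 hj.1 hne) hi.2 hj.2
    calc _ ≤ ∑ i ∈ E, (if u ∈ W i then s i + P i / β i else 0) := sum_le_sum (hterm u)
      _ = ∑ i ∈ E with u ∈ W i, (s i + P i / β i) := (sum_filter _ _).symm
      _ ≤ 3 / 2 * T := sum_le_of_card_le_one hunique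
          (fun i hi => by linarith [hsT i (mem_filter.1 hi).1, hshare i (mem_filter.1 hi).1])
          (by positivity)
  · calc _ ≤ ∑ u, ∑ i ∈ E, (if u ∈ W i then s i + P i / β i else 0) :=
          sum_le_sum fun u _ => sum_le_sum (hterm u)
      _ = ∑ i ∈ E, (β i * s i + P i) := by
          rw [sum_comm]
          refine sum_congr rfl fun i hi => ?_
          rw [hsum i hi (fun i => s i + P i / β i), mul_add, hβP i hi]

end Expensive

theorem exists_alloc_load_le {γ υ : Type*} [Fintype γ] [Fintype υ] {s P : γ → ℝ} {T : ℝ}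
    (hT : 0 < T) (hs : ∀ i, 0 ≤ s i) (hsT : ∀ i, s i ≤ T) (hP : ∀ i, 0 ≤ P i) {β : γ → ℕ}
    (hβ : ∀ i, 2 * P i ≤ β i * T)
    (hL : ∑ i, P i + ∑ i ∈ univ.filter (fun i => s i ≤ T / 2), s i
      + ∑ i ∈ univ.filter (fun i => T / 2 < s i), (β i : ℝ) * s i ≤ Fintype.card υ * T)
    (hm : ∑ i ∈ univ.filter (fun i => T / 2 < s i), β i ≤ Fintype.card υ) :
    ∃ q : γ → υ → ℝ, (∀ i u, 0 ≤ q i u) ∧ (∀ i, ∑ u, q i u = P i) ∧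
      ∀ u, ∑ i, loadWithSetup (s i) (q i u) ≤ 3 / 2 * T := by
  set E := univ.filter (fun i => T / 2 < s i)
  set K := univ.filter (fun i => s i ≤ T / 2)
  have hEK : ∀ f : γ → ℝ, ∑ i ∈ E, f i + ∑ i ∈ K, f i = ∑ i, f i := fun f => by
    simpa only [not_lt] using sum_filter_add_sum_filter_not univ (fun i => T / 2 < s i) f
  obtain ⟨qE, hqE0, hqE, hDle, hDsum⟩ :=
    exists_dedicated_alloc (υ := υ) E hT hs (fun i _ => hsT i) hP (fun i _ => hβ i) hm
  set D := fun u => ∑ i ∈ E, loadWithSetup (s i) (qE i u)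
  have hfit : ∑ i ∈ K, (s i + P i) ≤ ∑ u, max 0 (T - D u) :=
    calc _ = ∑ i, P i + ∑ i ∈ K, s i - ∑ i ∈ E, P i := by
          rw [sum_add_distrib, ← hEK P]; ring
      _ ≤ Fintype.card υ * T - ∑ i ∈ E, (β i * s i + P i) := by
          rw [sum_add_distrib]; linarith
      _ ≤ Fintype.card υ * T - ∑ u, D u := by linarith
      _ = ∑ u, (T - D u) := by rw [sum_sub_distrib, sum_const, card_univ, nsmul_eq_mul]
      _ ≤ _ := sum_le_sum fun u _ => le_max_right _ _
  obtain ⟨qK, hqK0, hqK, hqKzero, hKle⟩ := exists_wrapAround_alloc K hs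
    (fun i hi => (mem_filter.1 hi).2) (by positivity) hP (fun u => le_max_left 0 (T - D u)) hfit
  refine ⟨fun i => if T / 2 < s i then qE i else qK i, fun i u => ?_, fun i => ?_, fun u => ?_⟩
  · dsimp only
    split_ifs
    exacts [hqE0 i u, hqK0 i u]
  · dsimp only
    split_ifs with h
    exacts [hqE i (mem_filter.2 ⟨mem_univ i, h⟩), hqK i (mem_filter.2 ⟨mem_univ i, not_lt.1 h⟩)]
  · have hsplit : ∑ i, loadWithSetup (s i) ((if T / 2 < s i then qE i else qK i) u)
        = D u + ∑ i ∈ K, loadWithSetup (s i) (qK i u) := by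
      rw [← hEK]
      congr 1 <;> refine sum_congr rfl fun i hi => ?_
      · rw [if_pos (mem_filter.1 hi).2]
      · rw [if_neg (not_lt.2 (mem_filter.1 hi).2)]
    rw [hsplit]
    rcases le_or_gt (D u) T with h | h
    · linarith [hKle u, max_eq_right (sub_nonneg.2 h)]
    · have hfull : max 0 (T - D u) = 0 := max_eq_left (by linarith)
      rw [sum_eq_zero fun i _ => by rw [hqKzero u hfull i, loadWithSetup_zero], add_zero]
      exact hDle u

theorem sp_dual_approximation_general {υ γ ι : Type*} [Fintype υ] [Fintype γ] [Fintype ι]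
    [Nonempty υ]
    (cl : ι → γ) (t : ι → ℝ) (s : γ → ℝ)
    (ht : ∀ j, 0 < t j) (hs : ∀ i, 0 < s i)
    (T : ℝ) (hT : 0 < T) (hsT : ∀ i, s i ≤ T)
    (hL : ((∑ j, t j) + (∑ i ∈ univ.filter (fun i : γ => s i ≤ T / 2), s i) +
      (∑ i ∈ univ.filter (fun i : γ => T / 2 < s i),
        (⌈2 * (∑ j ∈ univ.filter (fun j => cl j = i), t j) / T⌉ : ℝ) * s i))
      ≤ (Fintype.card υ : ℝ) * T)
    (hm : (∑ i ∈ univ.filter (fun i : γ => T / 2 < s i),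
        ⌈2 * (∑ j ∈ univ.filter (fun j => cl j = i), t j) / T⌉)
      ≤ (Fintype.card υ : ℤ)) :
    ∃ σ : SplitSchedule (υ := υ) t, spMakespan cl t s σ ≤ 3 / 2 * T := by
  have hP : ∀ i, 0 ≤ classTime cl t i := fun i => sum_nonneg fun j _ => (ht j).le
  set β : γ → ℕ := fun i => ⌈2 * classTime cl t i / T⌉₊
  have hβ : ∀ i, 2 * classTime cl t i ≤ β i * T := fun i => (div_le_iff₀ hT).1 (Nat.le_ceil _)
  have hβZ : ∀ i, (β i : ℤ) = ⌈2 * (∑ j ∈ univ.filter (fun j => cl j = i), t j) / T⌉ :=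
    fun i => Int.natCast_ceil_eq_ceil (by have := hP i; positivity)
  have hm' : ∑ i ∈ univ.filter (fun i => T / 2 < s i), (β i : ℤ) ≤ Fintype.card υ := by
    simpa only [← hβZ] using hm
  obtain ⟨q, hq0, hq, hload⟩ := exists_alloc_load_le (υ := υ) hT (fun i => (hs i).le) hsT hP hβ
    (by simpa only [← sum_classTime cl t, ← hβZ, Int.cast_natCast] using hL) (by exact_mod_cast hm')
  obtain ⟨σ, hσ⟩ := exists_splitSchedule_spLoad_eq cl t s ht q hq0 hq
  exact ⟨σ, sup'_le _ _ fun u _ => (hσ u).trans_le (hload u)⟩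

/-- Theorem 3.5 (ii), splittable 3/2-dual approximation: if `s_i ≤ T` for all classes,
`m·T ≥ L_split` and `m ≥ m_exp`, then there is a splittable schedule with makespan at most
`(3/2)·T`. -/
theorem sp_dual_approximation {υ γ ι : Type*} [Fintype υ] [Fintype γ] [Fintype ι]
    [Nonempty υ]
    (cl : ι → γ) (t : ι → ℝ) (s : γ → ℝ)
    (ht : ∀ j, 0 < t j) (hs : ∀ i, 0 < s i)
    (hcl : ∀ i : γ, ∃ j, cl j = i)
    (T : ℝ) (hT : 0 < T) (hsT : ∀ i, s i ≤ T)
    (hL : ((∑ j, t j) + (∑ i ∈ univ.filter (fun i : γ => s i ≤ T / 2), s i) +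
      (∑ i ∈ univ.filter (fun i : γ => T / 2 < s i),
        (⌈2 * (∑ j ∈ univ.filter (fun j => cl j = i), t j) / T⌉ : ℝ) * s i))
      ≤ (Fintype.card υ : ℝ) * T)
    (hm : (∑ i ∈ univ.filter (fun i : γ => T / 2 < s i),
        ⌈2 * (∑ j ∈ univ.filter (fun j => cl j = i), t j) / T⌉)
      ≤ (Fintype.card υ : ℤ)) :
    ∃ σ : SplitSchedule (υ := υ) t, spMakespan cl t s σ ≤ 3 / 2 * T :=
  sp_dual_approximation_general cl t s ht hs T hT hsT hL hm
end

section
/- (Theorem 4.3 (i), rejection test for nice preemptive instances.) Let T > 0. Define I_exp = { i : s_i > T/2 }, I_chp = { i : s_i ≤ T/2 }, I_exp^+ = { i ∈ I_exp : T ≤ s_i + P(C_i) }, I_exp^0 = { i ∈ I_exp : (3/4)T < s_i + P(C_i) < T }, I_exp^- = { i ∈ I_exp : s_i + P(C_i) ≤ (3/4)T }, and α_i' = ⌊P(C_i)/(T − s_i)⌋. Assume the instance is nice for T, i.e. I_exp^0 = ∅. Let L_nice = P(J) + Σ_{i∈I_exp^+} α_i'·s_i + Σ_{i∈I_exp^-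 ∪ I_chp} s_i and m_nice = ⌈|I_exp^-|/2⌉ + Σ_{i∈I_exp^+} α_i'. If there exists a feasible preemptive schedule with makespan at most T, then m·T ≥ L_nice and m ≥ m_nice. Equivalently, if m·T < L_nice or m < m_nice, then T is strictly smaller than the optimal preemptive makespan. -/
open Classical Finset

/-- A feasible preemptive schedule with makespan at most `M` for an instance of scheduling
with batch setup times: machines `υ`, classes `γ`, jobs `ι`, class assignment `cl`,
processing times `t`, setup times `s`. Each job `j` is given a finite set of job pieces
`(u, a, b)` (job `j` runs on machine `u` during `(a, b)`), the pieces of one job are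
pairwise disjoint in time (no parallelization) and their lengths sum to `t j`; each machine
carries finitely many setup intervals `(i, a)` representing the interval `(a, a + s i)`;
on each machine all job-piece and setup intervals are pairwise disjoint, and every job
piece of a class-`i` job is preceded by a class-`i` setup on the same machine with no
foreign setup or foreign job piece intersecting the time in between. -/
structure PSchedule (υ : Type*) {γ ι : Type*} [Fintype υ] [Fintype γ] [Fintype ι]
    (cl : ι → γ) (t : ι → ℝ) (s : γ → ℝ) (M : ℝ) where
  pieces : ι → Finset (υ × ℝ × ℝ)
  setups : υ → Finset (γ × ℝ)
  pieces_bounds : ∀ j, ∀ p ∈ pieces j, 0 ≤ p.2.1 ∧ p.2.1 < p.2.2 ∧ p.2.2 ≤ M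
  pieces_no_parallel : ∀ j, ∀ p ∈ pieces j, ∀ q ∈ pieces j, p ≠ q →
    p.2.2 ≤ q.2.1 ∨ q.2.2 ≤ p.2.1
  pieces_sum : ∀ j, (∑ p ∈ pieces j, (p.2.2 - p.2.1)) = t j
  setup_bounds : ∀ u, ∀ q ∈ setups u, 0 ≤ q.2 ∧ q.2 + s q.1 ≤ M
  machine_pieces_disjoint : ∀ (j₁ j₂ : ι), ∀ p₁ ∈ pieces j₁, ∀ p₂ ∈ pieces j₂,
    p₁.1 = p₂.1 → (j₁ ≠ j₂ ∨ p₁ ≠ p₂) → p₁.2.2 ≤ p₂.2.1 ∨ p₂.2.2 ≤ p₁.2.1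
  machine_setups_disjoint : ∀ (u : υ), ∀ q₁ ∈ setups u, ∀ q₂ ∈ setups u, q₁ ≠ q₂ →
    q₁.2 + s q₁.1 ≤ q₂.2 ∨ q₂.2 + s q₂.1 ≤ q₁.2
  machine_piece_setup_disjoint : ∀ (j : ι), ∀ p ∈ pieces j, ∀ q ∈ setups p.1,
    p.2.2 ≤ q.2 ∨ q.2 + s q.1 ≤ p.2.1
  setup_before : ∀ (j : ι), ∀ p ∈ pieces j, ∃ a' : ℝ, (cl j, a') ∈ setups p.1 ∧
    a' + s (cl j) ≤ p.2.1 ∧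
    (∀ q ∈ setups p.1, q.1 ≠ cl j → ¬ (q.2 < p.2.1 ∧ a' + s (cl j) < q.2 + s q.1)) ∧
    (∀ j' : ι, cl j' ≠ cl j → ∀ p' ∈ pieces j', p'.1 = p.1 →
      ¬ (p'.2.1 < p.2.1 ∧ a' + s (cl j) < p'.2.2))

/-- The load of machine `u` in a preemptive schedule: the total length of all job-piece
and setup intervals on `u`. -/
noncomputable def pLoad {υ γ ι : Type*} [Fintype υ] [Fintype γ] [Fintype ι]
    {cl : ι → γ} {t : ι → ℝ} {s : γ → ℝ} {M : ℝ}
    (σ : PSchedule υ cl t s M) (u : υ) : ℝ :=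
  (∑ j, ∑ p ∈ (σ.pieces j).filter (fun p => p.1 = u), (p.2.2 - p.2.1)) +
  (∑ q ∈ σ.setups u, s q.1)

/-! On each machine the job pieces and setups are pairwise disjoint subintervals of `[0, T]`,
so every machine carries load at most `T`. Let `N i` be the number of class-`i` setups over
all machines. The total load is `P(J) + Σ N i · s i ≤ m T`. Every class has a job, hence a
setup, so `N i ≥ 1`; and on a machine with a class-`i` setup, that setup and all class-`i`
work there fit into `[0, T]`, so `P(C_i) ≤ N i · (T - s i)`, i.e. `α'_i ≤ N i`. This gives the
load bound. Two setups longer than `T / 2` cannot share a machine, so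
`Σ_{i ∈ I_exp} N i ≤ m`, which bounds `m_nice`. -/

open MeasureTheory in
theorem sum_sub_le_of_pairwise_disjoint {β : Type*} (F : Finset β) (a b : β → ℝ) {c d : ℝ}
    (hcd : c ≤ d) (hab : ∀ p ∈ F, c ≤ a p ∧ a p ≤ b p ∧ b p ≤ d)
    (hdisj : ∀ p ∈ F, ∀ q ∈ F, p ≠ q → b p ≤ a q ∨ b q ≤ a p) :
    ∑ p ∈ F, (b p - a p) ≤ d - c := by
  have hpair : (F : Set β).PairwiseDisjoint (fun p => Set.Ioo (a p) (b p)) := by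
    intro p hp q hq hpq
    rw [Function.onFun, Set.Ioo_disjoint_Ioo]
    rcases hdisj p hp q hq hpq with h | h
    · exact (min_le_left _ _).trans (h.trans (le_max_right _ _))
    · exact (min_le_right _ _).trans (h.trans (le_max_left _ _))
  have hvol : ∑ p ∈ F, volume (Set.Ioo (a p) (b p)) ≤ volume (Set.Icc c d) := by
    rw [← measure_biUnion_finset hpair fun p _ => measurableSet_Ioo]
    refine measure_mono (Set.iUnion₂_subset fun p hp x hx => ?_)
    exact ⟨(hab p hp).1.trans hx.1.le, hx.2.le.trans (hab p hp).2.2⟩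
  simp only [Real.volume_Ioo, Real.volume_Icc] at hvol
  rw [← ENNReal.ofReal_sum_of_nonneg fun p hp => sub_nonneg.2 (hab p hp).2.1] at hvol
  exact (ENNReal.ofReal_le_ofReal_iff (sub_nonneg.2 hcd)).1 hvol

namespace PSchedule

variable {υ γ ι : Type*} [Fintype υ] [Fintype γ] [Fintype ι]
  {cl : ι → γ} {t : ι → ℝ} {s : γ → ℝ} {M : ℝ} (σ : PSchedule υ cl t s M)

noncomputable def pieceTime (j : ι) (u : υ) : ℝ :=
  ∑ p ∈ (σ.pieces j).filter (fun p => p.1 = u), (p.2.2 - p.2.1)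

noncomputable def numSetupsOn (i : γ) (u : υ) : ℕ :=
  ((σ.setups u).filter (fun q => q.1 = i)).card

noncomputable def numSetups (i : γ) : ℕ :=
  ∑ u, σ.numSetupsOn i u

theorem sum_pieceTime (j : ι) : ∑ u, σ.pieceTime j u = t j :=
  (sum_fiberwise (σ.pieces j) (fun p => p.1) (fun p => p.2.2 - p.2.1)).trans (σ.pieces_sum j)

theorem pieceTime_nonneg (j : ι) (u : υ) : 0 ≤ σ.pieceTime j u :=
  sum_nonneg fun p hp => sub_nonneg.2 (σ.pieces_bounds j p (mem_filter.1 hp).1).2.1.le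

theorem processing_nonneg (σ : PSchedule υ cl t s M) (j : ι) : 0 ≤ t j :=
  σ.sum_pieceTime j ▸ sum_nonneg fun u _ => σ.pieceTime_nonneg j u

theorem pieces_nonempty {j : ι} (hj : t j ≠ 0) : (σ.pieces j).Nonempty := by
  rw [nonempty_iff_ne_empty]
  intro h
  exact hj (by rw [← σ.pieces_sum j, h, sum_empty])

theorem numSetupsOn_pos {j : ι} {p : υ × ℝ × ℝ} (hp : p ∈ σ.pieces j) :
    0 < σ.numSetupsOn (cl j) p.1 := by
  obtain ⟨a', ha', -⟩ := σ.setup_before j p hp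
  exact card_pos.2 ⟨_, mem_filter.2 ⟨ha', rfl⟩⟩

theorem one_le_numSetups {j : ι} (hj : t j ≠ 0) : 1 ≤ σ.numSetups (cl j) := by
  obtain ⟨p, hp⟩ := σ.pieces_nonempty hj
  exact (σ.numSetupsOn_pos hp).trans_le
    (single_le_sum (f := σ.numSetupsOn (cl j)) (fun _ _ => Nat.zero_le _) (mem_univ p.1))

theorem pieceTime_eq_zero {j : ι} {u : υ} (h : σ.numSetupsOn (cl j) u = 0) :
    σ.pieceTime j u = 0 := by
  refine sum_eq_zero fun p hp => absurd h ?_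
  obtain ⟨hpj, rfl⟩ := mem_filter.1 hp
  exact (σ.numSetupsOn_pos hpj).ne'

theorem sum_pieceTime_add_sum_setups_le (hs : ∀ i, 0 ≤ s i) (hM : 0 ≤ M) (u : υ)
    (J' : Finset ι) {S' : Finset (γ × ℝ)} (hS' : S' ⊆ σ.setups u) :
    ∑ j ∈ J', σ.pieceTime j u + ∑ q ∈ S', s q.1 ≤ M := by
  set F := (J'.sigma fun j => (σ.pieces j).filter (fun p => p.1 = u)).disjSum S'
  let a : (Σ _ : ι, υ × ℝ × ℝ) ⊕ (γ × ℝ) → ℝ := Sum.elim (fun x => x.2.2.1) (fun q => q.2)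
  let b : (Σ _ : ι, υ × ℝ × ℝ) ⊕ (γ × ℝ) → ℝ :=
    Sum.elim (fun x => x.2.2.2) (fun q => q.2 + s q.1)
  have mem_inl {j : ι} {p : υ × ℝ × ℝ} (h : .inl ⟨j, p⟩ ∈ F) : p ∈ σ.pieces j ∧ p.1 = u := by
    simp only [F, inl_mem_disjSum, mem_sigma, mem_filter] at h
    exact h.2
  have mem_inr {q : γ × ℝ} (h : .inr q ∈ F) : q ∈ σ.setups u :=
    hS' (inr_mem_disjSum.1 h)
  have hab : ∀ x ∈ F, 0 ≤ a x ∧ a x ≤ b x ∧ b x ≤ M := by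
    rintro (⟨j, p⟩ | q) h
    · obtain ⟨h₁, h₂, h₃⟩ := σ.pieces_bounds j p (mem_inl h).1
      exact ⟨h₁, h₂.le, h₃⟩
    · obtain ⟨h₁, h₂⟩ := σ.setup_bounds u q (mem_inr h)
      exact ⟨h₁, le_add_of_nonneg_right (hs q.1), h₂⟩
  have hdisj : ∀ x ∈ F, ∀ y ∈ F, x ≠ y → b x ≤ a y ∨ b y ≤ a x := by
    rintro (⟨j₁, p₁⟩ | q₁) h₁ (⟨j₂, p₂⟩ | q₂) h₂ hne
    · obtain ⟨hp₁, rfl⟩ := mem_inl h₁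
      obtain ⟨hp₂, hu⟩ := mem_inl h₂
      refine σ.machine_pieces_disjoint j₁ j₂ p₁ hp₁ p₂ hp₂ hu.symm ?_
      by_cases hj : j₁ = j₂
      · subst hj
        exact .inr fun hp => hne (by rw [hp])
      · exact .inl hj
    · obtain ⟨hp₁, rfl⟩ := mem_inl h₁
      exact σ.machine_piece_setup_disjoint j₁ p₁ hp₁ q₂ (mem_inr h₂)
    · obtain ⟨hp₂, rfl⟩ := mem_inl h₂
      exact (σ.machine_piece_setup_disjoint j₂ p₂ hp₂ q₁ (mem_inr h₁)).symm
    · exact σ.machine_setups_disjoint u q₁ (mem_inr h₁) q₂ (mem_inr h₂) fun h => hne (by rw [h])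
  have hsum : ∑ x ∈ F, (b x - a x) = ∑ j ∈ J', σ.pieceTime j u + ∑ q ∈ S', s q.1 := by
    simp only [F, sum_disjSum, sum_sigma, a, b, Sum.elim_inl, Sum.elim_inr, add_sub_cancel_left]
    rfl
  simpa only [hsum, sub_zero] using sum_sub_le_of_pairwise_disjoint F a b hM hab hdisj

theorem pLoad_le (hs : ∀ i, 0 ≤ s i) (hM : 0 ≤ M) (u : υ) : pLoad σ u ≤ M :=
  σ.sum_pieceTime_add_sum_setups_le hs hM u univ subset_rfl

theorem sum_setups_eq (u : υ) :
    ∑ q ∈ σ.setups u, s q.1 = ∑ i, (σ.numSetupsOn i u : ℝ) * s i := by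
  rw [← sum_fiberwise (σ.setups u) (fun q => q.1) (fun q => s q.1)]
  refine sum_congr rfl fun i _ => ?_
  rw [sum_congr rfl fun q hq => by rw [(mem_filter.1 hq).2], sum_const, nsmul_eq_mul]
  rfl

theorem sum_pLoad :
    ∑ u, pLoad σ u = ∑ j, t j + ∑ i, (σ.numSetups i : ℝ) * s i := by
  simp only [pLoad, sum_add_distrib]
  congr 1
  · rw [sum_comm]
    exact sum_congr rfl fun j _ => σ.sum_pieceTime j
  · simp only [σ.sum_setups_eq, numSetups, Nat.cast_sum, sum_mul]
    exact sum_comm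

theorem sum_pieceTime_class_le (hs : ∀ i, 0 ≤ s i) (hM : 0 ≤ M) (i : γ) (u : υ) :
    ∑ j ∈ univ.filter (fun j => cl j = i), σ.pieceTime j u ≤ σ.numSetupsOn i u * (M - s i) := by
  rcases Nat.eq_zero_or_pos (σ.numSetupsOn i u) with h | h
  · rw [h, Nat.cast_zero, zero_mul]
    refine (sum_eq_zero fun j hj => σ.pieceTime_eq_zero ?_).le
    rwa [(mem_filter.1 hj).2]
  · obtain ⟨q, hq⟩ := card_pos.1 h
    obtain ⟨hqu, rfl⟩ := mem_filter.1 hq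
    have hfit := σ.sum_pieceTime_add_sum_setups_le hs hM u (univ.filter (fun j => cl j = q.1))
      (singleton_subset_iff.2 hqu)
    rw [sum_singleton] at hfit
    have hsM : 0 ≤ M - s q.1 := by linarith [σ.setup_bounds u q hqu]
    calc _ ≤ M - s q.1 := by linarith
      _ ≤ _ := le_mul_of_one_le_left hsM (by exact_mod_cast h)

theorem sum_class_le (hs : ∀ i, 0 ≤ s i) (hM : 0 ≤ M) (i : γ) :
    ∑ j ∈ univ.filter (fun j => cl j = i), t j ≤ σ.numSetups i * (M - s i) := by
  calc ∑ j ∈ univ.filter (fun j => cl j = i), t j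
      = ∑ u, ∑ j ∈ univ.filter (fun j => cl j = i), σ.pieceTime j u := by
        rw [sum_comm]
        exact sum_congr rfl fun j _ => (σ.sum_pieceTime j).symm
    _ ≤ ∑ u, (σ.numSetupsOn i u : ℝ) * (M - s i) :=
        sum_le_sum fun u _ => σ.sum_pieceTime_class_le hs hM i u
    _ = σ.numSetups i * (M - s i) := by simp only [numSetups, Nat.cast_sum, sum_mul]

theorem floor_div_le_numSetups (hs : ∀ i, 0 ≤ s i) (hM : 0 ≤ M) (i : γ) :
    ⌊(∑ j ∈ univ.filter (fun j => cl j = i), t j) / (M - s i)⌋ ≤ σ.numSetups i := by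
  rw [Int.floor_le_iff]
  refine lt_of_le_of_lt ?_ (lt_add_one (σ.numSetups i : ℝ))
  have hP := sum_nonneg fun j (_ : j ∈ univ.filter (fun j => cl j = i)) => σ.processing_nonneg j
  rcases le_or_gt (M - s i) 0 with h | h
  · exact (div_nonpos_of_nonneg_of_nonpos hP h).trans (Nat.cast_nonneg _)
  · exact_mod_cast (div_le_iff₀ h).2 (σ.sum_class_le hs hM i)

theorem sum_numSetupsOn_le_one {E : Finset γ} (hE : ∀ i ∈ E, M / 2 < s i) (u : υ) :
    ∑ i ∈ E, σ.numSetupsOn i u ≤ 1 := by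
  have hcount : ∑ i ∈ E, σ.numSetupsOn i u = #{q ∈ σ.setups u | q.1 ∈ E} := by
    simp only [numSetupsOn]
    convert sum_card_fiberwise_eq_card_filter (σ.setups u) E Prod.fst
  rw [hcount, card_le_one]
  intro q₁ hq₁ q₂ hq₂
  obtain ⟨hq₁, hE₁⟩ := mem_filter.1 hq₁
  obtain ⟨hq₂, hE₂⟩ := mem_filter.1 hq₂
  by_contra hne
  have := hE q₁.1 hE₁
  have := hE q₂.1 hE₂
  have := σ.setup_bounds u q₁ hq₁
  have := σ.setup_bounds u q₂ hq₂
  rcases σ.machine_setups_disjoint u q₁ hq₁ q₂ hq₂ hne with h | h <;> linarith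

theorem sum_numSetups_le_card {E : Finset γ} (hE : ∀ i ∈ E, M / 2 < s i) :
    ∑ i ∈ E, σ.numSetups i ≤ Fintype.card υ := by
  calc ∑ i ∈ E, σ.numSetups i = ∑ u, ∑ i ∈ E, σ.numSetupsOn i u := sum_comm
    _ ≤ ∑ _u : υ, 1 := sum_le_sum fun u _ => σ.sum_numSetupsOn_le_one hE u
    _ = Fintype.card υ := by rw [sum_const, smul_eq_mul, mul_one, card_univ]

end PSchedule

theorem pmtn_nice_rejection_test_general {υ γ ι : Type*} [Fintype υ] [Fintype γ] [Fintype ι]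
    (cl : ι → γ) (t : ι → ℝ) (s : γ → ℝ)
    (ht : ∀ j, 0 < t j) (hs : ∀ i, 0 < s i)
    (hcl : ∀ i : γ, ∃ j, cl j = i)
    (T : ℝ) (hT : 0 < T)
    (P : γ → ℝ) (hP : ∀ i, P i = ∑ j ∈ univ.filter (fun j => cl j = i), t j)
    (Iexpp Iexpm Ichp : Finset γ)
    (hIexpp : Iexpp = univ.filter (fun i => T / 2 < s i ∧ T ≤ s i + P i))
    (hIexpm : Iexpm = univ.filter (fun i => T / 2 < s i ∧ s i + P i ≤ 3 / 4 * T))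
    (hIchp : Ichp = univ.filter (fun i => s i ≤ T / 2))
    (α' : γ → ℤ) (hα' : ∀ i, α' i = ⌊P i / (T - s i)⌋)
    (Lnice : ℝ)
    (hLnice : Lnice = (∑ j, t j) + (∑ i ∈ Iexpp, (α' i : ℝ) * s i) +
      (∑ i ∈ Iexpm ∪ Ichp, s i))
    (mnice : ℤ)
    (hmnice : mnice = (((Iexpm.card + 1) / 2 : ℕ) : ℤ) + (∑ i ∈ Iexpp, α' i))
    (σ : PSchedule υ cl t s T) :
    Lnice ≤ (Fintype.card υ : ℝ) * T ∧ mnice ≤ (Fintype.card υ : ℤ) := by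
  have hs₀ : ∀ i, 0 ≤ s i := fun i => (hs i).le
  have hα : ∀ i, α' i ≤ σ.numSetups i := fun i => by
    rw [hα', hP]
    exact σ.floor_div_le_numSetups hs₀ hT.le i
  have hone : ∀ i, 1 ≤ σ.numSetups i := fun i => by
    obtain ⟨j, rfl⟩ := hcl i
    exact σ.one_le_numSetups (ht j).ne'
  have hdisj : Disjoint Iexpp (Iexpm ∪ Ichp) := by
    simp only [hIexpp, hIexpm, hIchp, ← filter_or, disjoint_filter]
    intro i _ hi hi'
    rcases hi' with hi' | hi'
    · linarith [hi.2, hi'.2]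
    · linarith [hi.1]
  have hexp : ∀ i ∈ Iexpp ∪ Iexpm, T / 2 < s i := by
    intro i hi
    rcases mem_union.1 hi with hi | hi
    · exact (mem_filter.1 (hIexpp ▸ hi)).2.1
    · exact (mem_filter.1 (hIexpm ▸ hi)).2.1
  constructor
  · calc Lnice ≤ ∑ j, t j + ∑ i, (σ.numSetups i : ℝ) * s i := by
          rw [hLnice, add_assoc]
          gcongr ∑ j, t j + ?_
          calc ∑ i ∈ Iexpp, (α' i : ℝ) * s i + ∑ i ∈ Iexpm ∪ Ichp, s i
              ≤ ∑ i ∈ Iexpp, (σ.numSetups i : ℝ) * s i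
                + ∑ i ∈ Iexpm ∪ Ichp, (σ.numSetups i : ℝ) * s i := by
                refine add_le_add (sum_le_sum fun i _ => ?_) (sum_le_sum fun i _ => ?_)
                · exact mul_le_mul_of_nonneg_right (by exact_mod_cast hα i) (hs₀ i)
                · exact le_mul_of_one_le_left (hs₀ i) (by exact_mod_cast hone i)
            _ ≤ ∑ i, (σ.numSetups i : ℝ) * s i := by
                rw [← sum_union hdisj]
                exact sum_le_sum_of_subset_of_nonneg (subset_univ _)
                  fun i _ _ => mul_nonneg (Nat.cast_nonneg _) (hs₀ i)
      _ = ∑ u, pLoad σ u := σ.sum_pLoad.symm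
      _ ≤ ∑ _u : υ, T := sum_le_sum fun u _ => σ.pLoad_le hs₀ hT.le u
      _ = (Fintype.card υ : ℝ) * T := by rw [sum_const, nsmul_eq_mul, card_univ]
  · have hhalf : (Iexpm.card + 1) / 2 ≤ ∑ i ∈ Iexpm, σ.numSetups i :=
      calc (Iexpm.card + 1) / 2 ≤ Iexpm.card := by omega
        _ ≤ ∑ i ∈ Iexpm, σ.numSetups i := card_eq_sum_ones Iexpm ▸ sum_le_sum fun i _ => hone i
    calc mnice ≤ ((∑ i ∈ Iexpm, σ.numSetups i : ℕ) : ℤ) + ∑ i ∈ Iexpp, (σ.numSetups i : ℤ) := by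
          rw [hmnice]
          gcongr with i
          exact hα i
      _ = ((∑ i ∈ Iexpp ∪ Iexpm, σ.numSetups i : ℕ) : ℤ) := by
          rw [sum_union (hdisj.mono_right subset_union_left)]
          push_cast
          ring
      _ ≤ Fintype.card υ := by exact_mod_cast σ.sum_numSetups_le_card hexp

/-- Theorem 4.3 (i), rejection test for nice preemptive instances: if the instance is nice
for `T` (i.e. `I_exp^0 = ∅`) and a feasible preemptive schedule with makespan at most `T`
exists, then `m·T ≥ L_nice` and `m ≥ m_nice`. -/
theorem pmtn_nice_rejection_test {υ γ ι : Type*} [Fintype υ] [Fintype γ] [Fintype ι]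
    (cl : ι → γ) (t : ι → ℝ) (s : γ → ℝ)
    (ht : ∀ j, 0 < t j) (hs : ∀ i, 0 < s i)
    (hcl : ∀ i : γ, ∃ j, cl j = i)
    (T : ℝ) (hT : 0 < T)
    (P : γ → ℝ) (hP : ∀ i, P i = ∑ j ∈ univ.filter (fun j => cl j = i), t j)
    (Iexpp Iexp0 Iexpm Ichp : Finset γ)
    (hIexpp : Iexpp = univ.filter (fun i => T / 2 < s i ∧ T ≤ s i + P i))
    (hIexp0 : Iexp0 = univ.filter (fun i =>
      T / 2 < s i ∧ 3 / 4 * T < s i + P i ∧ s i + P i < T))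
    (hIexpm : Iexpm = univ.filter (fun i => T / 2 < s i ∧ s i + P i ≤ 3 / 4 * T))
    (hIchp : Ichp = univ.filter (fun i => s i ≤ T / 2))
    (α' : γ → ℤ) (hα' : ∀ i, α' i = ⌊P i / (T - s i)⌋)
    (hnice : Iexp0 = ∅)
    (Lnice : ℝ)
    (hLnice : Lnice = (∑ j, t j) + (∑ i ∈ Iexpp, (α' i : ℝ) * s i) +
      (∑ i ∈ Iexpm ∪ Ichp, s i))
    (mnice : ℤ)
    (hmnice : mnice = (((Iexpm.card + 1) / 2 : ℕ) : ℤ) + (∑ i ∈ Iexpp, α' i))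
    (σ : PSchedule υ cl t s T) :
    Lnice ≤ (Fintype.card υ : ℝ) * T ∧ mnice ≤ (Fintype.card υ : ℤ) :=
  pmtn_nice_rejection_test_general cl t s ht hs hcl T hT P hP Iexpp Iexpm Ichp hIexpp hIexpm hIchp
    α' hα' Lnice hLnice mnice hmnice σ
end
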